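/- arXiv:2508.20797 — 5 statements merged into one kernel-verified Lean document; each statement's English description precedes it below -/
import Mathlib

section
/- Let Y(z) := det[ I_{j−k}(2√z) ]_{j,k=1,…,4} for z > 0. Then Y satisfies the fifth order linear differential equation z⁴ Y⁽⁵⁾ + 20 z³ Y⁽⁴⁾ − 2(10z − 59) z² Y⁽³⁾ − 2(91z − 110) z Y″ + 4(16z² − 87z + 20) Y′ + 16(8z − 5) Y = 0 for all z > 0. -/
open Real

/-- Modified Bessel function of the first kind,
`I_ν(x) := Σ_{k=0}^∞ (x/2)^{ν+2k}/(k! Γ(ν+k+1))`. -/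
noncomputable def besselI (ν : ℝ) (x : ℝ) : ℝ :=
  ∑' k : ℕ, (x / 2) ^ (ν + 2 * (k : ℝ)) / ((k.factorial : ℝ) * Real.Gamma (ν + (k : ℝ) + 1))

/-- `Y(z) := det[I_{j-k}(2√z)]_{j,k=1,…,4}`, the generating function of `T_4(N)`. -/
noncomputable def Y4 (z : ℝ) : ℝ :=
  Matrix.det (fun j k : Fin 4 => besselI (((j : ℕ) : ℝ) - ((k : ℕ) : ℝ)) (2 * Real.sqrt z))

noncomputable def hfun (n : ℕ) (z : ℝ) : ℝ :=
  ∑' k : ℕ, z ^ k / ((k.factorial : ℝ) * ((n + k).factorial : ℝ))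



lemma hfun_bound (n k : ℕ) (z : ℝ) :
    ‖z ^ k / ((k.factorial : ℝ) * ((n + k).factorial : ℝ))‖ ≤ |z| ^ k / (k.factorial : ℝ) := by
  rw [norm_div, norm_pow, Real.norm_eq_abs, Real.norm_eq_abs]
  have h1 : (1:ℝ) ≤ ((n+k).factorial : ℝ) := by exact_mod_cast (n+k).factorial_pos
  have h2 : (0:ℝ) < (k.factorial : ℝ) := by exact_mod_cast k.factorial_pos
  rw [abs_of_nonneg (by positivity : (0:ℝ) ≤ (k.factorial : ℝ) * ((n + k).factorial : ℝ))]
  exact div_le_div_of_nonneg_left (by positivity) h2 (by nlinarith)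

lemma summable_hfun (n : ℕ) (z : ℝ) :
    Summable (fun k : ℕ => z ^ k / ((k.factorial : ℝ) * ((n + k).factorial : ℝ))) :=
  Summable.of_norm_bounded (Real.summable_pow_div_factorial |z|) (hfun_bound n · z)

lemma summable_kpow (R : ℝ) : Summable (fun k : ℕ => (k : ℝ) * R ^ k / k.factorial) := by
  apply (summable_nat_add_iff 1).1
  have : (fun k : ℕ => ((k + 1 : ℕ) : ℝ) * R ^ (k + 1) / (k + 1).factorial)
      = fun k : ℕ => R * (R ^ k / k.factorial) := by
    funext k
    have h2 : (0:ℝ) < (k.factorial : ℝ) := by exact_mod_cast k.factorial_pos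
    rw [Nat.factorial_succ]
    push_cast
    field_simp
    ring
  rw [this]
  exact (Real.summable_pow_div_factorial R).mul_left R

lemma kterm_bound (n k : ℕ) (z : ℝ) :
    ‖(k : ℝ) * z ^ k / ((k.factorial : ℝ) * ((n + k).factorial : ℝ))‖
      ≤ (k : ℝ) * |z| ^ k / (k.factorial : ℝ) := by
  rw [norm_div, norm_mul, norm_pow, Real.norm_eq_abs, Real.norm_eq_abs, Real.norm_eq_abs]
  have h1 : (1:ℝ) ≤ ((n+k).factorial : ℝ) := by exact_mod_cast (n+k).factorial_pos
  have h2 : (0:ℝ) < (k.factorial : ℝ) := by exact_mod_cast k.factorial_pos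
  rw [abs_of_nonneg (by positivity : (0:ℝ) ≤ (k.factorial : ℝ) * ((n + k).factorial : ℝ)),
    abs_of_nonneg (by positivity : (0:ℝ) ≤ (k:ℝ))]
  exact div_le_div_of_nonneg_left (by positivity) h2 (by nlinarith)

lemma summable_khfun (n : ℕ) (z : ℝ) :
    Summable (fun k : ℕ => (k : ℝ) * z ^ k / ((k.factorial : ℝ) * ((n + k).factorial : ℝ))) :=
  Summable.of_norm_bounded (summable_kpow |z|) (kterm_bound n · z)

/-- key recurrence: `∑ k z^k/(k!(n+1+k)!) = z * hfun (n+2) z`. -/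
lemma tsum_k_eq (n : ℕ) (z : ℝ) :
    ∑' k : ℕ, (k : ℝ) * z ^ k / ((k.factorial : ℝ) * ((n + 1 + k).factorial : ℝ))
      = z * hfun (n + 2) z := by
  rw [Summable.tsum_eq_zero_add (summable_khfun (n+1) z)]
  simp only [Nat.cast_zero, zero_mul, zero_div, zero_add]
  rw [hfun, ← tsum_mul_left]
  apply tsum_congr
  intro k
  have h2 : (0:ℝ) < (k.factorial : ℝ) := by exact_mod_cast k.factorial_pos
  have h3 : (0:ℝ) < (((n + 2 + k).factorial : ℕ) : ℝ) := by exact_mod_cast (n+2+k).factorial_pos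
  have e1 : n + 1 + (k + 1) = (n + 2 + k) := by omega
  rw [Nat.factorial_succ, e1]
  push_cast
  field_simp
  ring

lemma hfun_rec (n : ℕ) (z : ℝ) :
    z * hfun (n + 2) z = hfun n z - ((n : ℝ) + 1) * hfun (n + 1) z := by
  rw [← tsum_k_eq n z, hfun, hfun, ← tsum_mul_left,
    ← Summable.tsum_sub (summable_hfun n z) ((summable_hfun (n+1) z).mul_left _)]
  apply tsum_congr
  intro k
  have h2 : (0:ℝ) < (k.factorial : ℝ) := by exact_mod_cast k.factorial_pos
  have h4 : (0:ℝ) < (((n + k).factorial : ℕ) : ℝ) := by exact_mod_cast (n+k).factorial_pos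
  have e1 : n + 1 + k = (n + k) + 1 := by omega
  rw [e1, Nat.factorial_succ]
  push_cast
  field_simp
  ring


lemma deriv_term_bound (n k : ℕ) (y R : ℝ) (h1 : |y| ≤ R) (h2 : (1:ℝ) ≤ R) :
    ‖(k : ℝ) * y ^ (k - 1) / ((k.factorial : ℝ) * ((n + k).factorial : ℝ))‖
      ≤ (k:ℝ) * R ^ k / (k.factorial:ℝ) := by
  have hf1 : (0:ℝ) < (k.factorial : ℝ) := by exact_mod_cast k.factorial_pos
  have hf2 : (1:ℝ) ≤ ((n+k).factorial : ℝ) := by exact_mod_cast (n+k).factorial_pos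
  have hpow : |y| ^ (k-1) ≤ R ^ k := by
    calc |y| ^ (k-1) ≤ R ^ (k-1) := pow_le_pow_left₀ (abs_nonneg y) h1 _
    _ ≤ R ^ k := pow_le_pow_right₀ h2 (Nat.sub_le k 1)
  have hR0 : (0:ℝ) ≤ R := by linarith
  rw [norm_div, norm_mul, norm_pow, Real.norm_eq_abs, Real.norm_eq_abs, Real.norm_eq_abs,
    abs_of_nonneg (by positivity : (0:ℝ) ≤ (k.factorial : ℝ) * ((n + k).factorial : ℝ)),
    abs_of_nonneg (by positivity : (0:ℝ) ≤ (k:ℝ)),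
    div_le_div_iff₀ (by positivity) hf1]
  have h3 : (k:ℝ) * |y| ^ (k-1) * (k.factorial:ℝ) ≤ (k:ℝ) * R ^ k * (k.factorial:ℝ) := by
    have := mul_le_mul_of_nonneg_left hpow (by positivity : (0:ℝ) ≤ (k:ℝ))
    nlinarith
  calc (k:ℝ) * |y| ^ (k-1) * (k.factorial:ℝ) ≤ (k:ℝ) * R ^ k * (k.factorial:ℝ) := h3
  _ ≤ (k:ℝ) * R ^ k * ((k.factorial:ℝ) * ((n+k).factorial:ℝ)) := by
      have hnn : (0:ℝ) ≤ (k:ℝ) * R ^ k * (k.factorial:ℝ) := by positivity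
      nlinarith [mul_le_mul_of_nonneg_left hf2 hnn]

lemma tsum_deriv_eq (n : ℕ) (z : ℝ) :
    ∑' k : ℕ, (k : ℝ) * z ^ (k - 1) / ((k.factorial : ℝ) * ((n + k).factorial : ℝ))
      = hfun (n + 1) z := by
  rw [Summable.tsum_eq_zero_add]
  · simp only [Nat.cast_zero, zero_mul, zero_div, zero_add]
    rw [hfun]
    apply tsum_congr
    intro k
    have h2 : (0:ℝ) < (k.factorial : ℝ) := by exact_mod_cast k.factorial_pos
    have h3 : (0:ℝ) < (((n + 1 + k).factorial : ℕ) : ℝ) := by exact_mod_cast (n+1+k).factorial_pos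
    have e1 : n + (k + 1) = (n + 1 + k) := by omega
    simp only [Nat.add_sub_cancel, Nat.factorial_succ, e1]
    push_cast
    field_simp
  · -- summability of the shifted series
    exact Summable.of_norm_bounded (summable_kpow (|z|+1))
      (fun k => deriv_term_bound n k z (|z|+1) (by linarith) (by linarith [abs_nonneg z]))

lemma hasDerivAt_hfun (n : ℕ) (z : ℝ) : HasDerivAt (hfun n) (hfun (n + 1) z) z := by
  rw [← tsum_deriv_eq n z]
  set R := |z| + 1 with hR
  have hR1 : (1:ℝ) ≤ R := by simp only [hR]; linarith [abs_nonneg z]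
  have hzR : z ∈ Metric.ball (0:ℝ) R := by
    simp only [Metric.mem_ball, Real.dist_eq, sub_zero]; linarith [le_abs_self z]
  have hg : ∀ (k : ℕ) (y : ℝ), y ∈ Metric.ball (0:ℝ) R →
      HasDerivAt (fun y : ℝ => y ^ k / ((k.factorial : ℝ) * ((n + k).factorial : ℝ)))
        ((k : ℝ) * y ^ (k - 1) / ((k.factorial : ℝ) * ((n + k).factorial : ℝ))) y :=
    fun k y _ => (hasDerivAt_pow k y).div_const _
  have hg' : ∀ (k : ℕ) (y : ℝ), y ∈ Metric.ball (0:ℝ) R →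
      ‖(k : ℝ) * y ^ (k - 1) / ((k.factorial : ℝ) * ((n + k).factorial : ℝ))‖
        ≤ (k:ℝ) * R ^ k / (k.factorial:ℝ) := by
    intro k y hy
    simp only [Metric.mem_ball, Real.dist_eq, sub_zero] at hy
    exact deriv_term_bound n k y R (le_of_lt hy) hR1
  exact hasDerivAt_tsum_of_isPreconnected (summable_kpow R) Metric.isOpen_ball
    (convex_ball (0:ℝ) R).isPreconnected hg hg' hzR (summable_hfun n z) hzR

lemma besselI_nat_eval (n : ℕ) (z : ℝ) (hz : 0 < z) :
    besselI (n : ℝ) (2 * Real.sqrt z) = Real.sqrt z ^ n * hfun n z := by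
  have hs : (0:ℝ) ≤ Real.sqrt z := Real.sqrt_nonneg z
  rw [besselI, hfun, ← tsum_mul_left]
  apply tsum_congr
  intro k
  have e1 : (2 * Real.sqrt z) / 2 = Real.sqrt z := by ring
  have e2 : ((n : ℝ) + 2 * (k : ℝ)) = ((n + 2 * k : ℕ) : ℝ) := by push_cast; ring
  have e3 : ((n : ℝ) + (k : ℝ) + 1) = ((n + k : ℕ) : ℝ) + 1 := by push_cast; ring
  rw [e1, e2, e3, Real.rpow_natCast, Real.Gamma_nat_eq_factorial,
    pow_add, pow_mul, Real.sq_sqrt hz.le]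
  ring

lemma besselI_neg_nat_eval (n : ℕ) (z : ℝ) (hz : 0 < z) :
    besselI (-(n : ℝ)) (2 * Real.sqrt z) = Real.sqrt z ^ n * hfun n z := by
  have hs : (0:ℝ) ≤ Real.sqrt z := Real.sqrt_nonneg z
  rw [besselI, hfun, ← tsum_mul_left]
  rw [← Function.Injective.tsum_eq (g := fun m : ℕ => m + n) (add_left_injective n) ?_]
  · apply tsum_congr
    intro m
    have e1 : (2 * Real.sqrt z) / 2 = Real.sqrt z := by ring
    have e2 : (-(n : ℝ) + 2 * ((m + n : ℕ) : ℝ)) = ((n + 2 * m : ℕ) : ℝ) := by push_cast; ring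
    have e3 : (-(n : ℝ) + ((m + n : ℕ) : ℝ) + 1) = ((m : ℕ) : ℝ) + 1 := by push_cast; ring
    rw [e1, e2, e3, Real.rpow_natCast, Real.Gamma_nat_eq_factorial,
      pow_add, pow_mul, Real.sq_sqrt hz.le]
    push_cast
    ring
  · -- support: terms with k < n vanish
    intro k hk
    simp only [Function.mem_support] at hk
    simp only [Set.mem_range]
    by_contra hc
    push_neg at hc
    have hkn : k < n := by
      by_contra h
      push_neg at h
      exact hc (k - n) (by omega)
    apply hk
    have : (-(n:ℝ) + (k:ℝ) + 1) = -(((n - k - 1 : ℕ)):ℝ) := by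
      have : (n : ℝ) = ((n - k - 1 : ℕ) : ℝ) + k + 1 := by
        have h1 : k ≤ n := by omega
        have h2 : 1 ≤ n - k := by omega
        push_cast [Nat.cast_sub h1, Nat.cast_sub h2]
        ring
      rw [this]; ring
    rw [this, Real.Gamma_neg_nat_eq_zero, mul_zero, div_zero]


lemma mono_deriv (c : ℝ) (e p q : ℕ) (w : ℝ) :
    HasDerivAt (fun w : ℝ => c * w ^ e * hfun 0 w ^ p * hfun 1 w ^ q)
      ((c * ((e:ℝ) * w ^ (e-1)) * hfun 0 w ^ p
          + c * w ^ e * ((p:ℝ) * hfun 0 w ^ (p-1) * hfun 1 w)) * hfun 1 w ^ q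
        + c * w ^ e * hfun 0 w ^ p * ((q:ℝ) * hfun 1 w ^ (q-1) * hfun 2 w)) w :=
  (((hasDerivAt_pow e w).const_mul c).mul ((hasDerivAt_hfun 0 w).pow p)).mul
    ((hasDerivAt_hfun 1 w).pow q)

noncomputable def YF0 : ℝ → ℝ := fun w =>
  (((-4) : ℝ) * w ^ 0 * hfun 0 w ^ 2 * hfun 1 w ^ 2
      + (8 : ℝ) * w ^ 0 * hfun 0 w ^ 3 * hfun 1 w ^ 1
      + ((-4) : ℝ) * w ^ 0 * hfun 0 w ^ 4 * hfun 1 w ^ 0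
      + (1 : ℝ) * w ^ 1 * hfun 0 w ^ 0 * hfun 1 w ^ 4
      + ((-8) : ℝ) * w ^ 1 * hfun 0 w ^ 1 * hfun 1 w ^ 3
      + (8 : ℝ) * w ^ 1 * hfun 0 w ^ 2 * hfun 1 w ^ 2
      + ((-4) : ℝ) * w ^ 2 * hfun 0 w ^ 0 * hfun 1 w ^ 4) / w ^ 1

noncomputable def YF1 : ℝ → ℝ := fun w =>
  ((12 : ℝ) * w ^ 0 * hfun 0 w ^ 2 * hfun 1 w ^ 2
      + ((-24) : ℝ) * w ^ 0 * hfun 0 w ^ 3 * hfun 1 w ^ 1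
      + (12 : ℝ) * w ^ 0 * hfun 0 w ^ 4 * hfun 1 w ^ 0
      + ((-4) : ℝ) * w ^ 1 * hfun 0 w ^ 0 * hfun 1 w ^ 4
      + (20 : ℝ) * w ^ 1 * hfun 0 w ^ 1 * hfun 1 w ^ 3
      + ((-16) : ℝ) * w ^ 1 * hfun 0 w ^ 2 * hfun 1 w ^ 2
      + (4 : ℝ) * w ^ 2 * hfun 0 w ^ 0 * hfun 1 w ^ 4) / w ^ 2

noncomputable def YF2 : ℝ → ℝ := fun w =>
  (((-48) : ℝ) * w ^ 0 * hfun 0 w ^ 2 * hfun 1 w ^ 2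
      + (96 : ℝ) * w ^ 0 * hfun 0 w ^ 3 * hfun 1 w ^ 1
      + ((-48) : ℝ) * w ^ 0 * hfun 0 w ^ 4 * hfun 1 w ^ 0
      + (20 : ℝ) * w ^ 1 * hfun 0 w ^ 0 * hfun 1 w ^ 4
      + ((-72) : ℝ) * w ^ 1 * hfun 0 w ^ 1 * hfun 1 w ^ 3
      + (36 : ℝ) * w ^ 1 * hfun 0 w ^ 2 * hfun 1 w ^ 2
      + (16 : ℝ) * w ^ 1 * hfun 0 w ^ 3 * hfun 1 w ^ 1
      + (4 : ℝ) * w ^ 2 * hfun 0 w ^ 0 * hfun 1 w ^ 4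
      + ((-16) : ℝ) * w ^ 2 * hfun 0 w ^ 1 * hfun 1 w ^ 3) / w ^ 3

noncomputable def YF3 : ℝ → ℝ := fun w =>
  ((240 : ℝ) * w ^ 0 * hfun 0 w ^ 2 * hfun 1 w ^ 2
      + ((-480) : ℝ) * w ^ 0 * hfun 0 w ^ 3 * hfun 1 w ^ 1
      + (240 : ℝ) * w ^ 0 * hfun 0 w ^ 4 * hfun 1 w ^ 0
      + ((-120) : ℝ) * w ^ 1 * hfun 0 w ^ 0 * hfun 1 w ^ 4
      + (344 : ℝ) * w ^ 1 * hfun 0 w ^ 1 * hfun 1 w ^ 3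
      + ((-72) : ℝ) * w ^ 1 * hfun 0 w ^ 2 * hfun 1 w ^ 2
      + ((-168) : ℝ) * w ^ 1 * hfun 0 w ^ 3 * hfun 1 w ^ 1
      + (16 : ℝ) * w ^ 1 * hfun 0 w ^ 4 * hfun 1 w ^ 0
      + ((-92) : ℝ) * w ^ 2 * hfun 0 w ^ 0 * hfun 1 w ^ 4
      + (152 : ℝ) * w ^ 2 * hfun 0 w ^ 1 * hfun 1 w ^ 3
      + ((-16) : ℝ) * w ^ 3 * hfun 0 w ^ 0 * hfun 1 w ^ 4) / w ^ 4

noncomputable def YF4 : ℝ → ℝ := fun w =>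
  (((-1440) : ℝ) * w ^ 0 * hfun 0 w ^ 2 * hfun 1 w ^ 2
      + (2880 : ℝ) * w ^ 0 * hfun 0 w ^ 3 * hfun 1 w ^ 1
      + ((-1440) : ℝ) * w ^ 0 * hfun 0 w ^ 4 * hfun 1 w ^ 0
      + (840 : ℝ) * w ^ 1 * hfun 0 w ^ 0 * hfun 1 w ^ 4
      + ((-2064) : ℝ) * w ^ 1 * hfun 0 w ^ 1 * hfun 1 w ^ 3
      + ((-48) : ℝ) * w ^ 1 * hfun 0 w ^ 2 * hfun 1 w ^ 2
      + (1488 : ℝ) * w ^ 1 * hfun 0 w ^ 3 * hfun 1 w ^ 1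
      + ((-216) : ℝ) * w ^ 1 * hfun 0 w ^ 4 * hfun 1 w ^ 0
      + (896 : ℝ) * w ^ 2 * hfun 0 w ^ 0 * hfun 1 w ^ 4
      + ((-1272) : ℝ) * w ^ 2 * hfun 0 w ^ 1 * hfun 1 w ^ 3
      + ((-48) : ℝ) * w ^ 2 * hfun 0 w ^ 2 * hfun 1 w ^ 2
      + (64 : ℝ) * w ^ 2 * hfun 0 w ^ 3 * hfun 1 w ^ 1
      + (232 : ℝ) * w ^ 3 * hfun 0 w ^ 0 * hfun 1 w ^ 4
      + ((-64) : ℝ) * w ^ 3 * hfun 0 w ^ 1 * hfun 1 w ^ 3) / w ^ 5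

noncomputable def YF5 : ℝ → ℝ := fun w =>
  ((10080 : ℝ) * w ^ 0 * hfun 0 w ^ 2 * hfun 1 w ^ 2
      + ((-20160) : ℝ) * w ^ 0 * hfun 0 w ^ 3 * hfun 1 w ^ 1
      + (10080 : ℝ) * w ^ 0 * hfun 0 w ^ 4 * hfun 1 w ^ 0
      + ((-6720) : ℝ) * w ^ 1 * hfun 0 w ^ 0 * hfun 1 w ^ 4
      + (14928 : ℝ) * w ^ 1 * hfun 0 w ^ 1 * hfun 1 w ^ 3
      + (2736 : ℝ) * w ^ 1 * hfun 0 w ^ 2 * hfun 1 w ^ 2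
      + ((-13296) : ℝ) * w ^ 1 * hfun 0 w ^ 3 * hfun 1 w ^ 1
      + (2352 : ℝ) * w ^ 1 * hfun 0 w ^ 4 * hfun 1 w ^ 0
      + ((-8336) : ℝ) * w ^ 2 * hfun 0 w ^ 0 * hfun 1 w ^ 4
      + (11120 : ℝ) * w ^ 2 * hfun 0 w ^ 1 * hfun 1 w ^ 3
      + (888 : ℝ) * w ^ 2 * hfun 0 w ^ 2 * hfun 1 w ^ 2
      + ((-1216) : ℝ) * w ^ 2 * hfun 0 w ^ 3 * hfun 1 w ^ 1
      + (64 : ℝ) * w ^ 2 * hfun 0 w ^ 4 * hfun 1 w ^ 0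
      + ((-2664) : ℝ) * w ^ 3 * hfun 0 w ^ 0 * hfun 1 w ^ 4
      + (1152 : ℝ) * w ^ 3 * hfun 0 w ^ 1 * hfun 1 w ^ 3
      + ((-64) : ℝ) * w ^ 4 * hfun 0 w ^ 0 * hfun 1 w ^ 4) / w ^ 6

lemma dYF0 (w : ℝ) (hw : w ≠ 0) : HasDerivAt YF0 (YF1 w) w := by
  have h2 : hfun 2 w = (hfun 0 w - hfun 1 w) / w := by
    have h := hfun_rec 0 w; norm_num at h; rw [eq_div_iff hw]; linarith
  have H := HasDerivAt.div (((((((mono_deriv (-4) 0 2 2 w).add (mono_deriv 8 0 3 1 w)).add (mono_deriv (-4) 0 4 0 w)).add (mono_deriv 1 1 0 4 w)).add (mono_deriv (-8) 1 1 3 w)).add (mono_deriv 8 1 2 2 w)).add (mono_deriv (-4) 2 0 4 w))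
    (hasDerivAt_pow 1 w) (pow_ne_zero _ hw)
  unfold YF0 YF1
  refine H.congr_deriv ?_
  rw [h2]
  norm_num
  field_simp
  ring

lemma dYF1 (w : ℝ) (hw : w ≠ 0) : HasDerivAt YF1 (YF2 w) w := by
  have h2 : hfun 2 w = (hfun 0 w - hfun 1 w) / w := by
    have h := hfun_rec 0 w; norm_num at h; rw [eq_div_iff hw]; linarith
  have H := HasDerivAt.div (((((((mono_deriv 12 0 2 2 w).add (mono_deriv (-24) 0 3 1 w)).add (mono_deriv 12 0 4 0 w)).add (mono_deriv (-4) 1 0 4 w)).add (mono_deriv 20 1 1 3 w)).add (mono_deriv (-16) 1 2 2 w)).add (mono_deriv 4 2 0 4 w))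
    (hasDerivAt_pow 2 w) (pow_ne_zero _ hw)
  unfold YF1 YF2
  refine H.congr_deriv ?_
  rw [h2]
  norm_num
  field_simp
  ring

lemma dYF2 (w : ℝ) (hw : w ≠ 0) : HasDerivAt YF2 (YF3 w) w := by
  have h2 : hfun 2 w = (hfun 0 w - hfun 1 w) / w := by
    have h := hfun_rec 0 w; norm_num at h; rw [eq_div_iff hw]; linarith
  have H := HasDerivAt.div (((((((((mono_deriv (-48) 0 2 2 w).add (mono_deriv 96 0 3 1 w)).add (mono_deriv (-48) 0 4 0 w)).add (mono_deriv 20 1 0 4 w)).add (mono_deriv (-72) 1 1 3 w)).add (mono_deriv 36 1 2 2 w)).add (mono_deriv 16 1 3 1 w)).add (mono_deriv 4 2 0 4 w)).add (mono_deriv (-16) 2 1 3 w))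
    (hasDerivAt_pow 3 w) (pow_ne_zero _ hw)
  unfold YF2 YF3
  refine H.congr_deriv ?_
  rw [h2]
  norm_num
  field_simp
  ring

lemma dYF3 (w : ℝ) (hw : w ≠ 0) : HasDerivAt YF3 (YF4 w) w := by
  have h2 : hfun 2 w = (hfun 0 w - hfun 1 w) / w := by
    have h := hfun_rec 0 w; norm_num at h; rw [eq_div_iff hw]; linarith
  have H := HasDerivAt.div (((((((((((mono_deriv 240 0 2 2 w).add (mono_deriv (-480) 0 3 1 w)).add (mono_deriv 240 0 4 0 w)).add (mono_deriv (-120) 1 0 4 w)).add (mono_deriv 344 1 1 3 w)).add (mono_deriv (-72) 1 2 2 w)).add (mono_deriv (-168) 1 3 1 w)).add (mono_deriv 16 1 4 0 w)).add (mono_deriv (-92) 2 0 4 w)).add (mono_deriv 152 2 1 3 w)).add (mono_deriv (-16) 3 0 4 w))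
    (hasDerivAt_pow 4 w) (pow_ne_zero _ hw)
  unfold YF3 YF4
  refine H.congr_deriv ?_
  rw [h2]
  norm_num
  field_simp
  ring

lemma dYF4 (w : ℝ) (hw : w ≠ 0) : HasDerivAt YF4 (YF5 w) w := by
  have h2 : hfun 2 w = (hfun 0 w - hfun 1 w) / w := by
    have h := hfun_rec 0 w; norm_num at h; rw [eq_div_iff hw]; linarith
  have H := HasDerivAt.div ((((((((((((((mono_deriv (-1440) 0 2 2 w).add (mono_deriv 2880 0 3 1 w)).add (mono_deriv (-1440) 0 4 0 w)).add (mono_deriv 840 1 0 4 w)).add (mono_deriv (-2064) 1 1 3 w)).add (mono_deriv (-48) 1 2 2 w)).add (mono_deriv 1488 1 3 1 w)).add (mono_deriv (-216) 1 4 0 w)).add (mono_deriv 896 2 0 4 w)).add (mono_deriv (-1272) 2 1 3 w)).add (mono_deriv (-48) 2 2 2 w)).add (mono_deriv 64 2 3 1 w)).add (mono_deriv 232 3 0 4 w)).add (mono_deriv (-64) 3 1 3 w))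
    (hasDerivAt_pow 5 w) (pow_ne_zero _ hw)
  unfold YF4 YF5
  refine H.congr_deriv ?_
  rw [h2]
  norm_num
  field_simp
  ring

lemma Y4_eqF (z : ℝ) (hz : 0 < z) : Y4 z = YF0 z := by
  unfold YF0
  set s := Real.sqrt z with hsdef
  have hs2 : s ^ 2 = z := Real.sq_sqrt hz.le
  have E0 : besselI ((0:ℕ) : ℝ) (2 * Real.sqrt z) = Real.sqrt z ^ 0 * hfun 0 z :=
    besselI_nat_eval 0 z hz
  have E1 : besselI ((1:ℕ) : ℝ) (2 * Real.sqrt z) = Real.sqrt z ^ 1 * hfun 1 z :=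
    besselI_nat_eval 1 z hz
  have E2 : besselI ((2:ℕ) : ℝ) (2 * Real.sqrt z) = Real.sqrt z ^ 2 * hfun 2 z :=
    besselI_nat_eval 2 z hz
  have E3 : besselI ((3:ℕ) : ℝ) (2 * Real.sqrt z) = Real.sqrt z ^ 3 * hfun 3 z :=
    besselI_nat_eval 3 z hz
  have E1' : besselI (-((1:ℕ) : ℝ)) (2 * Real.sqrt z) = Real.sqrt z ^ 1 * hfun 1 z :=
    besselI_neg_nat_eval 1 z hz
  have E2' : besselI (-((2:ℕ) : ℝ)) (2 * Real.sqrt z) = Real.sqrt z ^ 2 * hfun 2 z :=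
    besselI_neg_nat_eval 2 z hz
  have E3' : besselI (-((3:ℕ) : ℝ)) (2 * Real.sqrt z) = Real.sqrt z ^ 3 * hfun 3 z :=
    besselI_neg_nat_eval 3 z hz
  norm_num at E0 E1 E2 E3 E1' E2' E3'
  have hM : (fun j k : Fin 4 => besselI (((j : ℕ) : ℝ) - ((k : ℕ) : ℝ)) (2 * Real.sqrt z))
      = !![hfun 0 z, Real.sqrt z * hfun 1 z, Real.sqrt z ^ 2 * hfun 2 z, Real.sqrt z ^ 3 * hfun 3 z;
           Real.sqrt z * hfun 1 z, hfun 0 z, Real.sqrt z * hfun 1 z, Real.sqrt z ^ 2 * hfun 2 z;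
           Real.sqrt z ^ 2 * hfun 2 z, Real.sqrt z * hfun 1 z, hfun 0 z, Real.sqrt z * hfun 1 z;
           Real.sqrt z ^ 3 * hfun 3 z, Real.sqrt z ^ 2 * hfun 2 z, Real.sqrt z * hfun 1 z, hfun 0 z] := by
    ext j k
    fin_cases j <;> fin_cases k <;> norm_num [E0, E1, E2, E3, E1', E2', E3']
  rw [Y4, hM]
  have hc : hfun 2 z = (hfun 0 z - hfun 1 z) / z := by
    have h := hfun_rec 0 z; norm_num at h; rw [eq_div_iff hz.ne']; linarith
  have hd : hfun 3 z = (hfun 1 z - 2 * hfun 2 z) / z := by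
    have h := hfun_rec 1 z; norm_num at h; rw [eq_div_iff hz.ne']; linarith
  have a1 : (Fin.succAbove (1 : Fin 4) 1 : Fin 4) = 2 := by decide
  have a2 : (Fin.succAbove (1 : Fin 4) 2 : Fin 4) = 3 := by decide
  have a3 : (Fin.succAbove (2 : Fin 4) 1 : Fin 4) = 1 := by decide
  have a4 : (Fin.succAbove (2 : Fin 4) 2 : Fin 4) = 3 := by decide
  have a5 : (Fin.succAbove (3 : Fin 4) 1 : Fin 4) = 1 := by decide
  have a6 : (Fin.succAbove (3 : Fin 4) 2 : Fin 4) = 2 := by decide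
  rw [Matrix.det_succ_row_zero]
  simp [Fin.sum_univ_succ, Matrix.det_fin_three, Matrix.submatrix_apply, a1, a2, a3, a4, a5, a6]
  rw [hd, hc]
  field_simp
  rw [← hsdef, ← hs2]
  ring

lemma Y4iter1 (z : ℝ) (hz : 0 < z) : iteratedDeriv 1 YF0 z = YF1 z := by
  rw [iteratedDeriv_one]
  exact (dYF0 z hz.ne').deriv

lemma Y4iter2 (z : ℝ) (hz : 0 < z) : iteratedDeriv 2 YF0 z = YF2 z := by
  rw [iteratedDeriv_succ]
  have hev : iteratedDeriv 1 YF0 =ᶠ[nhds z] YF1 :=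
    Filter.eventuallyEq_of_mem (isOpen_Ioi.mem_nhds hz) (fun w hw => Y4iter1 w hw)
  rw [hev.deriv_eq]
  exact (dYF1 z hz.ne').deriv

lemma Y4iter3 (z : ℝ) (hz : 0 < z) : iteratedDeriv 3 YF0 z = YF3 z := by
  rw [iteratedDeriv_succ]
  have hev : iteratedDeriv 2 YF0 =ᶠ[nhds z] YF2 :=
    Filter.eventuallyEq_of_mem (isOpen_Ioi.mem_nhds hz) (fun w hw => Y4iter2 w hw)
  rw [hev.deriv_eq]
  exact (dYF2 z hz.ne').deriv

lemma Y4iter4 (z : ℝ) (hz : 0 < z) : iteratedDeriv 4 YF0 z = YF4 z := by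
  rw [iteratedDeriv_succ]
  have hev : iteratedDeriv 3 YF0 =ᶠ[nhds z] YF3 :=
    Filter.eventuallyEq_of_mem (isOpen_Ioi.mem_nhds hz) (fun w hw => Y4iter3 w hw)
  rw [hev.deriv_eq]
  exact (dYF3 z hz.ne').deriv

lemma Y4iter5 (z : ℝ) (hz : 0 < z) : iteratedDeriv 5 YF0 z = YF5 z := by
  rw [iteratedDeriv_succ]
  have hev : iteratedDeriv 4 YF0 =ᶠ[nhds z] YF4 :=
    Filter.eventuallyEq_of_mem (isOpen_Ioi.mem_nhds hz) (fun w hw => Y4iter4 w hw)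
  rw [hev.deriv_eq]
  exact (dYF4 z hz.ne').deriv

/-- The fifth order linear ODE satisfied by `Y(z) = det[I_{j-k}(2√z)]_{j,k=1,…,4}`:
`z⁴Y⁽⁵⁾ + 20z³Y⁽⁴⁾ − 2(10z−59)z²Y⁽³⁾ − 2(91z−110)zY″ + 4(16z²−87z+20)Y′ + 16(8z−5)Y = 0`. -/
theorem Y4_fifth_order_ODE :
    ∀ z : ℝ, 0 < z →
      z ^ 4 * iteratedDeriv 5 Y4 z + 20 * z ^ 3 * iteratedDeriv 4 Y4 z
        - 2 * (10 * z - 59) * z ^ 2 * iteratedDeriv 3 Y4 z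
        - 2 * (91 * z - 110) * z * iteratedDeriv 2 Y4 z
        + 4 * (16 * z ^ 2 - 87 * z + 20) * deriv Y4 z
        + 16 * (8 * z - 5) * Y4 z = 0 := by
  intro z hz
  have hev : Y4 =ᶠ[nhds z] YF0 :=
    Filter.eventuallyEq_of_mem (isOpen_Ioi.mem_nhds hz) (fun w hw => Y4_eqF w hw)
  have h5 : iteratedDeriv 5 Y4 z = YF5 z := (hev.iteratedDeriv_eq 5).trans (Y4iter5 z hz)
  have h4 : iteratedDeriv 4 Y4 z = YF4 z := (hev.iteratedDeriv_eq 4).trans (Y4iter4 z hz)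
  have h3 : iteratedDeriv 3 Y4 z = YF3 z := (hev.iteratedDeriv_eq 3).trans (Y4iter3 z hz)
  have h2 : iteratedDeriv 2 Y4 z = YF2 z := (hev.iteratedDeriv_eq 2).trans (Y4iter2 z hz)
  have h1 : deriv Y4 z = YF1 z := hev.deriv_eq.trans (dYF0 z hz.ne').deriv
  have h0 : Y4 z = YF0 z := Y4_eqF z hz
  rw [h5, h4, h3, h2, h1, h0]
  unfold YF0 YF1 YF2 YF3 YF4 YF5
  have hz' : z ≠ 0 := hz.ne'
  field_simp
  ring
end

section
/- Let n ≥ 1 be an integer and B̃_0 = 0, B̃_1, …, B̃_n real numbers. Then there exist polynomials q_0, q_1, …, q_n with real coefficients, depending only on n and B̃_1,…,B̃_n, such that: (i) every tuple of smooth functions Î_0, …, Î_n : (0,∞) → ℝ satisfying the system (n−p) x Î_{p+1}(x) = B̃_p Î_p(x) + x Î_p′(x) − p Î_{p−1}(x) for p = 0,…,n (left side 0 when p = n; last term absent when p = 0) has its last member satisfy the scalar linear differential equation x^n Î_n^{(n+1)}(x) + q_n(x) x^{n−1} Î_n^{(n)}(x) + q_{n−1}(x) x^{n−2} Î_n^{(n−1)}(x)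 + ⋯ + q_2(x) x Î_n″(x) + q_1(x) Î_n′(x) + q_0(x) Î_n(x) = 0 for all x > 0; (ii) for each j = 0,…,n+1 the polynomial coefficient of the j-th derivative in this equation (namely x^n for j = n+1, x^{j−1}q_j(x) for 1 ≤ j ≤ n, and q_0(x) for j = 0) has degree at most ⌊(n−1+j)/2⌋; (iii) if B̃_1, …, B̃_n are all integers, then the polynomials q_0,…,q_n have integer coefficients. -/
open Polynomial

/-! Auxiliary machinery: the polynomial coefficients of the differential operators
`M_p` expressing `(n!/p!)·Î_p` in terms of `Î_n` and its derivatives. -/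

noncomputable def QP (n : ℕ) (B : ℕ → ℝ) : ℕ → ℕ → Polynomial ℝ
  | 0, k => if k = 0 then 1 else 0
  | (s+1), k =>
      (C (B (n - s)) + C (k : ℝ)) * QP n B s k + X * derivative (QP n B s k)
        + (if k = 0 then 0 else QP n B s (k - 1))
        - C ((s * (n - s + 1) : ℕ) : ℝ) * X * QP n B (s - 1) k
  termination_by s _ => s

noncomputable def QPZ (n : ℕ) (B : ℕ → ℤ) : ℕ → ℕ → Polynomial ℤ
  | 0, k => if k = 0 then 1 else 0
  | (s+1), k =>
      (C (B (n - s)) + C (k : ℤ)) * QPZ n B s k + X * derivative (QPZ n B s k)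
        + (if k = 0 then 0 else QPZ n B s (k - 1))
        - C ((s * (n - s + 1) : ℕ) : ℤ) * X * QPZ n B (s - 1) k
  termination_by s _ => s

lemma QP_eq_zero (n : ℕ) (B : ℕ → ℝ) : ∀ s k, s < k → QP n B s k = 0 := by
  intro s
  induction s using Nat.strong_induction_on with
  | _ s ih =>
    match s with
    | 0 => intro k hk; rw [QP]; simp [Nat.pos_iff_ne_zero.mp hk]
    | (s+1) =>
      intro k hk
      rw [QP]
      rw [ih s (by omega) k (by omega), ih (s-1) (by omega) k (by omega)]
      have : ¬ (k = 0) := by omega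
      rw [ih s (by omega) (k-1) (by omega)]
      simp [this]

lemma QP_diag (n : ℕ) (B : ℕ → ℝ) : ∀ s, QP n B s s = 1 := by
  intro s
  induction s using Nat.strong_induction_on with
  | _ s ih =>
    match s with
    | 0 => rw [QP]; simp
    | (s+1) =>
      rw [QP]
      rw [QP_eq_zero n B s (s+1) (by omega), QP_eq_zero n B (s-1) (s+1) (by omega)]
      simp [ih s (by omega)]

lemma natDegree_X_mul_derivative_le (p : Polynomial ℝ) :
    (X * derivative p).natDegree ≤ p.natDegree := by
  by_cases h : derivative p = 0
  · simp [h]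
  · have hd : p.natDegree ≠ 0 := by
      intro h0
      exact h (by rw [Polynomial.eq_C_of_natDegree_eq_zero h0]; simp)
    calc (X * derivative p).natDegree ≤ 1 + (derivative p).natDegree :=
          le_trans (natDegree_mul_le) (by simp)
      _ ≤ p.natDegree := by
          have := Polynomial.natDegree_derivative_lt hd
          omega

lemma QP_natDegree (n : ℕ) (B : ℕ → ℝ) : ∀ s k, (QP n B s k).natDegree ≤ (s - k) / 2 := by
  intro s
  induction s using Nat.strong_induction_on with
  | _ s ih =>
    match s with
    | 0 =>
      intro k; rw [QP]
      by_cases hk : k = 0 <;> simp [hk]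
    | (s+1) =>
      intro k
      rw [QP]
      refine le_trans (natDegree_sub_le _ _) (max_le (le_trans (natDegree_add_le _ _)
        (max_le (le_trans (natDegree_add_le _ _) (max_le ?_ ?_)) ?_)) ?_)
      · refine le_trans natDegree_mul_le ?_
        rw [← C_add, natDegree_C]
        have := ih s (by omega) k
        omega
      · have := le_trans (natDegree_X_mul_derivative_le _) (ih s (by omega) k)
        omega
      · by_cases hk : k = 0
        · simp [hk]
        · simp only [if_neg hk]
          have := ih s (by omega) (k-1)
          omega
      · by_cases hs0 : s = 0
        · simp [hs0]
        by_cases hks : s ≤ k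
        · rw [QP_eq_zero n B (s-1) k (by omega)]; simp
        · have h2 := ih (s-1) (by omega) k
          rw [mul_assoc]
          refine le_trans (natDegree_C_mul_le _ _) (le_trans natDegree_mul_le ?_)
          rw [natDegree_X]
          omega

lemma QP_map (n : ℕ) (B : ℕ → ℝ) (bz : ℕ → ℤ) (hB : ∀ p, p ≤ n → B p = (bz p : ℝ)) :
    ∀ s k, QP n B s k = Polynomial.map (Int.castRingHom ℝ) (QPZ n bz s k) := by
  intro s
  induction s using Nat.strong_induction_on with
  | _ s ih =>
    match s with
    | 0 =>
      intro k; rw [QP, QPZ]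
      by_cases hk : k = 0 <;> simp [hk]
    | (s+1) =>
      intro k
      rw [QP, QPZ]
      rw [ih s (by omega) k, ih (s-1) (by omega) k]
      have hb : B (n - s) = ((bz (n - s) : ℤ) : ℝ) := hB _ (by omega)
      by_cases hk : k = 0
      · simp [hk, hb, Polynomial.map_add, Polynomial.map_sub, Polynomial.map_mul,
          Polynomial.derivative_map, Polynomial.map_C, Polynomial.map_X]
      · rw [ih s (by omega) (k-1)]
        simp [hk, hb, Polynomial.map_add, Polynomial.map_sub, Polynomial.map_mul,
          Polynomial.derivative_map, Polynomial.map_C, Polynomial.map_X]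

/-- The polynomials appearing as coefficients in the scalar ODE. -/
noncomputable def qpoly (n : ℕ) (B : ℕ → ℝ) : ℕ → Polynomial ℝ := fun j =>
  if j = 0 then derivative (QP n B n 0) - C (n : ℝ) * QP n B (n - 1) 0
  else C (j : ℝ) * QP n B n j + X * derivative (QP n B n j) + QP n B n (j - 1)
        - C (n : ℝ) * X * QP n B (n - 1) j

lemma hasDerivAt_iDW (f : ℝ → ℝ) (hf : ContDiffOn ℝ (⊤ : ℕ∞) f (Set.Ioi 0)) (k : ℕ)
    {x : ℝ} (hx : x ∈ Set.Ioi (0:ℝ)) :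
    HasDerivAt (iteratedDerivWithin k f (Set.Ioi 0))
      (iteratedDerivWithin (k+1) f (Set.Ioi 0) x) x := by
  have hU : UniqueDiffOn ℝ (Set.Ioi (0:ℝ)) := uniqueDiffOn_Ioi 0
  have hd : DifferentiableOn ℝ (iteratedDerivWithin k f (Set.Ioi 0)) (Set.Ioi 0) :=
    hf.differentiableOn_iteratedDerivWithin (by exact_mod_cast ENat.coe_lt_top k) hU
  have hda := ((hd x hx).differentiableAt (isOpen_Ioi.mem_nhds hx)).hasDerivAt
  rwa [← derivWithin_of_isOpen isOpen_Ioi hx, ← iteratedDerivWithin_succ] at hda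

lemma hasDerivAt_Ioi (h : ℝ → ℝ) (hh : ContDiffOn ℝ (⊤ : ℕ∞) h (Set.Ioi 0))
    {x : ℝ} (hx : x ∈ Set.Ioi (0:ℝ)) :
    HasDerivAt h (derivWithin h (Set.Ioi 0) x) x := by
  have hd : DifferentiableOn ℝ h (Set.Ioi 0) := hh.differentiableOn (by simp)
  have hda := ((hd x hx).differentiableAt (isOpen_Ioi.mem_nhds hx)).hasDerivAt
  rwa [← derivWithin_of_isOpen isOpen_Ioi hx] at hda

/-- Derivative of the sum `F s` computed from the hypothesis that it equals `d · h` on `Ioi 0`. -/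
lemma derivD (n : ℕ) (B : ℕ → ℝ) (s : ℕ) (f h : ℝ → ℝ)
    (hf : ContDiffOn ℝ (⊤ : ℕ∞) f (Set.Ioi 0)) (hh : ContDiffOn ℝ (⊤ : ℕ∞) h (Set.Ioi 0)) (d : ℝ)
    (hkey : ∀ y ∈ Set.Ioi (0:ℝ),
      ∑ k ∈ Finset.range (n+2),
        (QP n B s k).eval y * (y ^ k * iteratedDerivWithin k f (Set.Ioi 0) y) = d * h y)
    {x : ℝ} (hx : x ∈ Set.Ioi (0:ℝ)) :
    ∑ k ∈ Finset.range (n+2),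
      ((derivative (QP n B s k)).eval x * (x ^ k * iteratedDerivWithin k f (Set.Ioi 0) x)
        + (QP n B s k).eval x * (((k : ℝ) * x ^ (k-1)) * iteratedDerivWithin k f (Set.Ioi 0) x
            + x ^ k * iteratedDerivWithin (k+1) f (Set.Ioi 0) x))
      = d * derivWithin h (Set.Ioi 0) x := by
  have hF : HasDerivAt (fun y => ∑ k ∈ Finset.range (n+2),
      (QP n B s k).eval y * (y ^ k * iteratedDerivWithin k f (Set.Ioi 0) y))
      (∑ k ∈ Finset.range (n+2),
        ((derivative (QP n B s k)).eval x * (x ^ k * iteratedDerivWithin k f (Set.Ioi 0) x)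
          + (QP n B s k).eval x * (((k : ℝ) * x ^ (k-1)) * iteratedDerivWithin k f (Set.Ioi 0) x
              + x ^ k * iteratedDerivWithin (k+1) f (Set.Ioi 0) x))) x := by
    apply HasDerivAt.fun_sum
    intro k _
    exact ((QP n B s k).hasDerivAt x).mul ((hasDerivAt_pow k x).mul (hasDerivAt_iDW f hf k hx))
  have hG : HasDerivAt (fun y => d * h y) (d * derivWithin h (Set.Ioi 0) x) x :=
    (hasDerivAt_Ioi h hh hx).const_mul d
  have heq : deriv (fun y => ∑ k ∈ Finset.range (n+2),
      (QP n B s k).eval y * (y ^ k * iteratedDerivWithin k f (Set.Ioi 0) y)) x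
      = deriv (fun y => d * h y) x :=
    Filter.EventuallyEq.deriv_eq (Filter.eventuallyEq_of_mem (isOpen_Ioi.mem_nhds hx) hkey)
  rw [← hF.deriv, heq, hG.deriv]

/-- The key induction: `F s = (n!/(n-s)!) ⬝ I (n-s)` on `Ioi 0`. -/
lemma key (n : ℕ) (B : ℕ → ℝ) (I : ℕ → ℝ → ℝ)
    (hI : ∀ p, p ≤ n → ContDiffOn ℝ (⊤ : ℕ∞) (I p) (Set.Ioi 0))
    (hsys : ∀ x : ℝ, 0 < x → ∀ p : ℕ, p ≤ n →
      ((n : ℝ) - p) * x * I (p + 1) x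
        = B p * I p x + x * derivWithin (I p) (Set.Ioi 0) x - (p : ℝ) * I (p - 1) x) :
    ∀ s, s ≤ n → ∀ y ∈ Set.Ioi (0:ℝ),
      ∑ k ∈ Finset.range (n + 2),
          (QP n B s k).eval y * (y ^ k * iteratedDerivWithin k (I n) (Set.Ioi 0) y)
        = (n.descFactorial s : ℝ) * I (n - s) y := by
  intro s
  induction s using Nat.strong_induction_on with
  | _ s ih =>
  match s with
  | 0 =>
    intro _ x hx
    rw [Finset.sum_eq_single 0]
    · rw [QP]; simp [iteratedDerivWithin_zero]
    · intro k _ hk; rw [QP]; simp [hk]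
    · intro h; exact absurd (Finset.mem_range.mpr (by omega)) h
  | (s+1) =>
    intro hs x hx
    have hxpos : (0:ℝ) < x := hx
    set u : ℕ → ℝ := fun k => iteratedDerivWithin k (I n) (Set.Ioi 0) x with hu
    set p : ℕ := n - s with hpdef
    have hp1 : 1 ≤ p := by omega
    have hpn : p ≤ n := by omega
    set D : ℝ := ∑ k ∈ Finset.range (n+2),
      ((derivative (QP n B s k)).eval x * (x ^ k * u k)
        + (QP n B s k).eval x * (((k : ℝ) * x ^ (k-1)) * u k + x ^ k * u (k+1))) with hD
    have hkey_s : ∀ y ∈ Set.Ioi (0:ℝ),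
        ∑ k ∈ Finset.range (n+2),
          (QP n B s k).eval y * (y ^ k * iteratedDerivWithin k (I n) (Set.Ioi 0) y)
          = (n.descFactorial s : ℝ) * I p y := fun y hy => ih s (by omega) (by omega) y hy
    have hDval : D = (n.descFactorial s : ℝ) * derivWithin (I p) (Set.Ioi 0) x :=
      derivD n B s (I n) (I p) (hI n le_rfl) (hI p hpn) _ hkey_s hx
    -- termwise expansion of `QP (s+1)`
    have e1 : ∀ k ∈ Finset.range (n+2), (QP n B (s+1) k).eval x * (x ^ k * u k)
        = B p * ((QP n B s k).eval x * (x ^ k * u k))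
          + x * ((derivative (QP n B s k)).eval x * (x ^ k * u k)
              + (QP n B s k).eval x * (((k : ℝ) * x ^ (k-1)) * u k))
          + (if k = 0 then (0:Polynomial ℝ) else QP n B s (k-1)).eval x * (x ^ k * u k)
          - ((s * (n - s + 1) : ℕ) : ℝ) * x * ((QP n B (s-1) k).eval x * (x ^ k * u k)) := by
      intro k _
      rw [QP]
      cases k with
      | zero => simp; ring
      | succ m =>
        simp [pow_succ, Nat.add_sub_cancel]
        push_cast
        ring
    -- shift identity
    have hshift : ∑ k ∈ Finset.range (n+2),
        (if k = 0 then (0:Polynomial ℝ) else QP n B s (k-1)).eval x * (x ^ k * u k)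
        = x * ∑ k ∈ Finset.range (n+2), (QP n B s k).eval x * (x ^ k * u (k+1)) := by
      rw [Finset.sum_range_succ' _ (n+1), Finset.mul_sum]
      rw [Finset.sum_range_succ (fun k => x * ((QP n B s k).eval x * (x ^ k * u (k+1)))) (n+1)]
      rw [QP_eq_zero n B s (n+1) (by omega)]
      simp only [if_pos rfl, eval_zero, zero_mul, add_zero, mul_zero, eval_zero,
        Nat.add_sub_cancel, Nat.succ_ne_zero, if_neg, pow_succ]
      norm_num
      exact Finset.sum_congr rfl fun i _ => by ring
    have main : ∑ k ∈ Finset.range (n+2), (QP n B (s+1) k).eval x * (x ^ k * u k)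
        = B p * (∑ k ∈ Finset.range (n+2), (QP n B s k).eval x * (x ^ k * u k))
          + x * D
          - ((s * (n - s + 1) : ℕ) : ℝ) * x *
            (∑ k ∈ Finset.range (n+2), (QP n B (s-1) k).eval x * (x ^ k * u k)) := by
      have hDsplit : D = (∑ k ∈ Finset.range (n+2),
            ((derivative (QP n B s k)).eval x * (x ^ k * u k)
              + (QP n B s k).eval x * (((k : ℝ) * x ^ (k-1)) * u k)))
          + ∑ k ∈ Finset.range (n+2), (QP n B s k).eval x * (x ^ k * u (k+1)) := by
        rw [hD, ← Finset.sum_add_distrib]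
        exact Finset.sum_congr rfl fun k _ => by ring
      rw [Finset.sum_congr rfl e1, Finset.sum_sub_distrib, Finset.sum_add_distrib,
        Finset.sum_add_distrib, hshift, hDsplit]
      rw [mul_add x]
      simp only [Finset.mul_sum]
      ring
    -- evaluate the three pieces
    have hFs := hkey_s x hx
    have hterm : ((s * (n - s + 1) : ℕ) : ℝ) * x *
        (∑ k ∈ Finset.range (n+2), (QP n B (s-1) k).eval x * (x ^ k * u k))
        = (s : ℝ) * ((n.descFactorial s : ℝ) * (x * I (p+1) x)) := by
      rcases Nat.eq_zero_or_pos s with hs0 | hs0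
      · simp [hs0]
      · have hF1 := ih (s-1) (by omega) (by omega) x hx
        have hnn : n - (s-1) = p + 1 := by omega
        rw [hF1, hnn]
        have h3 : s - 1 + 1 = s := by omega
        have h4 : n - (s - 1) = n - s + 1 := by omega
        have harith : s * (n - s + 1) * n.descFactorial (s-1) = s * n.descFactorial s := by
          calc s * (n - s + 1) * n.descFactorial (s - 1)
              = s * ((n - (s-1)) * n.descFactorial (s - 1)) := by rw [h4]; ring
            _ = s * n.descFactorial ((s-1)+1) := by rw [Nat.descFactorial_succ]
            _ = s * n.descFactorial s := by rw [h3]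
        have hc : ((s * (n - s + 1) : ℕ) : ℝ) * (n.descFactorial (s-1) : ℝ)
            = (s : ℝ) * (n.descFactorial s : ℝ) := by exact_mod_cast harith
        linear_combination x * I (p+1) x * hc
    have hcast : ((n : ℝ) - (p : ℕ)) = (s : ℝ) := by
      have : (p : ℝ) = (n : ℝ) - (s : ℝ) := by
        rw [hpdef]; push_cast [Nat.cast_sub (by omega : s ≤ n)]; ring
      rw [this]; ring
    have hsysp := hsys x hxpos p hpn
    rw [main, hFs, hDval, hterm]
    have hgoal : (n.descFactorial (s+1) : ℝ) = (p : ℝ) * (n.descFactorial s : ℝ) := by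
      rw [Nat.descFactorial_succ]; push_cast; ring
    have hps : n - (s+1) = p - 1 := by omega
    rw [hps, hgoal]
    have hrear : B p * I p x + x * derivWithin (I p) (Set.Ioi 0) x
        - ((n : ℝ) - p) * x * I (p+1) x = (p : ℝ) * I (p-1) x := by linarith
    rw [hcast] at hrear
    nlinarith [hrear]
  termination_by s => s

/-- The purely algebraic regrouping of the final ODE. -/
lemma halg (n : ℕ) (hn : 1 ≤ n) (B : ℕ → ℝ) (x : ℝ) (u : ℕ → ℝ) :
    (∑ k ∈ Finset.range (n+2),
      ((derivative (QP n B n k)).eval x * (x ^ k * u k)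
        + (QP n B n k).eval x * (((k : ℝ) * x ^ (k-1)) * u k + x ^ k * u (k+1))))
      - n * ∑ k ∈ Finset.range (n+2), (QP n B (n-1) k).eval x * (x ^ k * u k)
    = x ^ n * u (n+1)
      + (∑ j ∈ Finset.Icc 1 n, (qpoly n B j).eval x * x ^ (j-1) * u j)
      + (qpoly n B 0).eval x * u 0 := by
  set T : ℕ → ℝ := fun k => (derivative (QP n B n k)).eval x * (x ^ k * u k)
      + (k : ℝ) * ((QP n B n k).eval x * (x ^ (k-1) * u k))
      - (n : ℝ) * ((QP n B (n-1) k).eval x * (x ^ k * u k)) with hT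
  have step1 : (∑ k ∈ Finset.range (n+2),
      ((derivative (QP n B n k)).eval x * (x ^ k * u k)
        + (QP n B n k).eval x * (((k : ℝ) * x ^ (k-1)) * u k + x ^ k * u (k+1))))
      - n * ∑ k ∈ Finset.range (n+2), (QP n B (n-1) k).eval x * (x ^ k * u k)
      = (∑ k ∈ Finset.range (n+2), T k)
        + ∑ k ∈ Finset.range (n+2), (QP n B n k).eval x * (x ^ k * u (k+1)) := by
    rw [Finset.mul_sum, ← Finset.sum_sub_distrib, ← Finset.sum_add_distrib]
    refine Finset.sum_congr rfl fun k _ => by rw [hT]; ring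
  have step3 : ∑ k ∈ Finset.range (n+2), (QP n B n k).eval x * (x ^ k * u (k+1))
      = (∑ k ∈ Finset.range n, (QP n B n k).eval x * (x ^ k * u (k+1))) + x ^ n * u (n+1) := by
    rw [Finset.sum_range_succ, QP_eq_zero n B n (n+1) (by omega), Finset.sum_range_succ, QP_diag]
    simp
  have hTn1 : T (n+1) = 0 := by
    rw [hT]
    simp only
    rw [QP_eq_zero n B n (n+1) (by omega), QP_eq_zero n B (n-1) (n+1) (by omega)]
    simp
  have step4 : ∑ k ∈ Finset.range (n+2), T k
      = (∑ i ∈ Finset.range n, T (i+1)) + T 0 := by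
    rw [Finset.sum_range_succ' T (n+1), Finset.sum_range_succ, hTn1, add_zero]
  have hq0 : T 0 = (qpoly n B 0).eval x * u 0 := by
    rw [hT, qpoly]
    simp
    ring
  have hRHS : ∑ j ∈ Finset.Icc 1 n, (qpoly n B j).eval x * x ^ (j-1) * u j
      = ∑ i ∈ Finset.range n, (T (i+1) + (QP n B n i).eval x * (x ^ i * u (i+1))) := by
    rw [← Finset.Ico_add_one_right_eq_Icc, Finset.sum_Ico_eq_sum_range]
    refine Finset.sum_congr (by norm_num) fun i _ => ?_
    rw [hT, qpoly, if_neg (by omega)]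
    simp only [add_comm 1 i, Nat.add_sub_cancel, eval_add, eval_sub, eval_mul, eval_C, eval_X]
    push_cast
    ring
  rw [step1, step3, step4, hRHS, Finset.sum_add_distrib, hq0]
  ring

/-- From the first order differential–difference system one obtains a scalar linear ODE of
degree `n+1` for the last member `Î_n`, with polynomial coefficients `q_0,…,q_n` depending
only on `n` and `B̃_1,…,B̃_n`, satisfying the stated degree bounds, and with integer
coefficients whenever the `B̃_p` are integers. -/
theorem scalar_ODE_from_differential_difference_system (n : ℕ) (hn : 1 ≤ n)
    (B : ℕ → ℝ) (hB0 : B 0 = 0) :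
    ∃ q : ℕ → Polynomial ℝ,
      -- (i) every smooth solution of the system on (0,∞) satisfies the scalar ODE
      (∀ I : ℕ → ℝ → ℝ,
        (∀ p : ℕ, p ≤ n → ContDiffOn ℝ (⊤ : ℕ∞) (I p) (Set.Ioi 0)) →
        (∀ x : ℝ, 0 < x → ∀ p : ℕ, p ≤ n →
          ((n : ℝ) - p) * x * I (p + 1) x
            = B p * I p x + x * derivWithin (I p) (Set.Ioi 0) x - (p : ℝ) * I (p - 1) x) →
        ∀ x : ℝ, 0 < x →
          x ^ n * iteratedDerivWithin (n + 1) (I n) (Set.Ioi 0) x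
            + (∑ j ∈ Finset.Icc 1 n,
                (q j).eval x * x ^ (j - 1) * iteratedDerivWithin j (I n) (Set.Ioi 0) x)
            + (q 0).eval x * I n x = 0)
      -- (ii) degree bounds: the coefficient of the j-th derivative has degree ≤ ⌊(n−1+j)/2⌋
      ∧ ((q 0).natDegree ≤ (n - 1) / 2)
      ∧ (∀ j : ℕ, 1 ≤ j → j ≤ n →
          ((Polynomial.X ^ (j - 1) * q j : Polynomial ℝ)).natDegree ≤ (n - 1 + j) / 2)
      ∧ (((Polynomial.X ^ n : Polynomial ℝ)).natDegree ≤ (n - 1 + (n + 1)) / 2)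
      -- (iii) integrality of the coefficients
      ∧ ((∀ p : ℕ, 1 ≤ p → p ≤ n → ∃ m : ℤ, B p = (m : ℝ)) →
          ∀ j : ℕ, j ≤ n → ∀ i : ℕ, ∃ m : ℤ, (q j).coeff i = (m : ℝ)) := by
  refine ⟨qpoly n B, ?_, ?_, ?_, ?_, ?_⟩
  · -- (i)
    intro I hI hsys x hx
    have hxS : x ∈ Set.Ioi (0:ℝ) := hx
    set u : ℕ → ℝ := fun k => iteratedDerivWithin k (I n) (Set.Ioi 0) x with hu
    have hkey := key n B I hI hsys
    have hDval := derivD n B n (I n) (I 0) (hI n le_rfl) (hI 0 (by omega))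
      ((n.descFactorial n : ℝ)) (by simpa using hkey n le_rfl) hxS
    have hFn1 := hkey (n-1) (by omega) x hxS
    have hnn1 : n - (n-1) = 1 := by omega
    rw [hnn1] at hFn1
    have hdesceq : (n.descFactorial (n-1) : ℝ) = (n.descFactorial n : ℝ) := by
      have h2 : n.descFactorial ((n-1)+1) = (n - (n-1)) * n.descFactorial (n-1) :=
        Nat.descFactorial_succ n (n-1)
      rw [show (n-1)+1 = n by omega, hnn1, one_mul] at h2
      rw [h2]
    -- the system at p = 0 : n * x * I 1 = x * I₀'
    have hsys0 := hsys x hx 0 (by omega)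
    rw [hB0] at hsys0
    push_cast at hsys0
    -- I₀' = n * I 1 at x
    have hI0' : derivWithin (I 0) (Set.Ioi 0) x = (n : ℝ) * I 1 x := by
      have hxne : x ≠ 0 := ne_of_gt hx
      have hxx : x * derivWithin (I 0) (Set.Ioi 0) x = x * ((n : ℝ) * I 1 x) := by
        linarith
      exact mul_left_cancel₀ hxne hxx
    have hzero : (∑ k ∈ Finset.range (n+2),
        ((derivative (QP n B n k)).eval x * (x ^ k * u k)
          + (QP n B n k).eval x * (((k : ℝ) * x ^ (k-1)) * u k + x ^ k * u (k+1))))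
        - n * ∑ k ∈ Finset.range (n+2), (QP n B (n-1) k).eval x * (x ^ k * u k) = 0 := by
      rw [hDval, hFn1, hI0', hdesceq]
      ring
    have halg' := halg n hn B x u
    rw [hzero] at halg'
    have hu0 : u 0 = I n x := by rw [hu]; simp [iteratedDerivWithin_zero]
    have hun1 : u (n+1) = iteratedDerivWithin (n+1) (I n) (Set.Ioi 0) x := rfl
    rw [hu0, hun1] at halg'
    exact halg'.symm
  · -- (ii) q 0
    rw [qpoly]; simp only [if_pos rfl]
    refine le_trans (natDegree_sub_le _ _) (max_le ?_ ?_)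
    · have h1 := Polynomial.natDegree_derivative_le (QP n B n 0)
      have h2 := QP_natDegree n B n 0
      omega
    · have := le_trans (natDegree_C_mul_le ((n:ℝ)) (QP n B (n-1) 0)) (QP_natDegree n B (n-1) 0)
      omega
  · -- (ii) q j
    intro j hj1 hjn
    have hqj : (qpoly n B j).natDegree ≤ (n + 1 - j) / 2 := by
      rw [qpoly, if_neg (by omega)]
      refine le_trans (natDegree_sub_le _ _) (max_le (le_trans (natDegree_add_le _ _)
        (max_le (le_trans (natDegree_add_le _ _) (max_le ?_ ?_)) ?_)) ?_)
      · have := le_trans (natDegree_C_mul_le ((j:ℝ)) (QP n B n j)) (QP_natDegree n B n j)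
        omega
      · have := le_trans (natDegree_X_mul_derivative_le _) (QP_natDegree n B n j)
        omega
      · have := QP_natDegree n B n (j-1)
        omega
      · rcases Nat.lt_or_ge (n-1) j with h | h
        · rw [QP_eq_zero n B (n-1) j h]; simp
        · rw [mul_assoc]
          refine le_trans (natDegree_C_mul_le _ _) (le_trans natDegree_mul_le ?_)
          rw [natDegree_X]
          have := QP_natDegree n B (n-1) j
          omega
    refine le_trans natDegree_mul_le ?_
    rw [natDegree_X_pow]
    omega
  · -- (ii) X^n
    rw [natDegree_X_pow]
    omega
  · -- (iii)
    intro hint j hjn i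
    set bz : ℕ → ℤ := fun p => if hp : 1 ≤ p ∧ p ≤ n then Classical.choose (hint p hp.1 hp.2) else 0
      with hbz
    have hB : ∀ p, p ≤ n → B p = (bz p : ℝ) := by
      intro p hp
      rcases Nat.eq_zero_or_pos p with h0 | h0
      · subst h0; simp [hbz, hB0]
      · have hp' : 1 ≤ p ∧ p ≤ n := ⟨h0, hp⟩
        rw [hbz]
        simp only [dif_pos hp']
        exact Classical.choose_spec (hint p hp'.1 hp'.2)
    have hmap := QP_map n B bz hB
    by_cases hj0 : j = 0
    · subst hj0
      have hq : qpoly n B 0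
          = map (Int.castRingHom ℝ) (derivative (QPZ n bz n 0) - C (n : ℤ) * QPZ n bz (n-1) 0) := by
        rw [qpoly, if_pos rfl, hmap, hmap]
        simp [Polynomial.map_sub, Polynomial.map_mul, Polynomial.map_C, Polynomial.derivative_map]
      rw [hq, Polynomial.coeff_map]
      exact ⟨_, rfl⟩
    · have hq : qpoly n B j
          = map (Int.castRingHom ℝ) (C (j : ℤ) * QPZ n bz n j + X * derivative (QPZ n bz n j)
              + QPZ n bz n (j-1) - C (n : ℤ) * X * QPZ n bz (n-1) j) := by
        rw [qpoly, if_neg hj0, hmap, hmap, hmap]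
        simp [Polynomial.map_add, Polynomial.map_sub, Polynomial.map_mul, Polynomial.map_C,
          Polynomial.map_X, Polynomial.derivative_map]
      rw [hq, Polynomial.coeff_map]
      exact ⟨_, rfl⟩
end

section
/- Let y(x) := (−1)^{2(2−1)/2} x^{−2²/2} det[ I_{j+k+1}(2√x) ]_{j,k=0,1} = −x^{−2} det[ I_{j+k+1}(2√x) ]_{j,k=0,1} for x > 0. Then y satisfies, for all x > 0, x² y⁽³⁾ + 10 x y″ + (20 − 4x) y′ − 10 y = 0. -/
open Real

/-- `y(x) := (−1)^{l(l−1)/2} x^{−l²/2} det[I_{j+k+1}(2√x)]_{j,k=0,…,l−1}`. -/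
noncomputable def hankelY (l : ℕ) (x : ℝ) : ℝ :=
  (-1 : ℝ) ^ (l * (l - 1) / 2) * x ^ (-((l : ℝ) ^ 2) / 2) *
    Matrix.det (fun j k : Fin l =>
      besselI (((j : ℕ) : ℝ) + ((k : ℕ) : ℝ) + 1) (2 * Real.sqrt x))

/-- auxiliary: `g_n(x) = Σ_k x^k/(k! (n+k)!) = x^{-n/2} I_n(2√x)` -/
noncomputable def hgAux (n : ℕ) (x : ℝ) : ℝ :=
  ∑' k : ℕ, x ^ k / ((k.factorial : ℝ) * ((n + k).factorial : ℝ))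

lemma hgAux_summable (n : ℕ) (x : ℝ) :
    Summable fun k : ℕ => x ^ k / ((k.factorial : ℝ) * ((n + k).factorial : ℝ)) := by
  apply Summable.of_norm_bounded (Real.summable_pow_div_factorial |x|)
  intro k
  have h1 : (1 : ℝ) ≤ ((n + k).factorial : ℝ) := by
    exact_mod_cast Nat.one_le_iff_ne_zero.2 (Nat.factorial_ne_zero (n + k))
  have h2 : (0 : ℝ) < (k.factorial : ℝ) := by positivity
  have hpos : (0 : ℝ) < (k.factorial : ℝ) * ((n + k).factorial : ℝ) := by positivity
  calc ‖x ^ k / ((k.factorial : ℝ) * ((n + k).factorial : ℝ))‖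
      = |x| ^ k / ((k.factorial : ℝ) * ((n + k).factorial : ℝ)) := by
        rw [Real.norm_eq_abs, abs_div, abs_pow, abs_of_pos hpos]
    _ ≤ |x| ^ k / ((k.factorial : ℝ) * 1) := by gcongr
    _ = |x| ^ k / (k.factorial : ℝ) := by rw [mul_one]

lemma hgAux_deriv_bound (n : ℕ) (R : ℝ) (hR : 1 ≤ R) (y : ℝ) (hy : |y| ≤ R) (k : ℕ) :
    ‖(k : ℝ) * y ^ (k - 1) / ((k.factorial : ℝ) * ((n + k).factorial : ℝ))‖
      ≤ (2 * R) ^ k / (k.factorial : ℝ) := by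
  have h1 : (1 : ℝ) ≤ ((n + k).factorial : ℝ) := by
    exact_mod_cast Nat.one_le_iff_ne_zero.2 (Nat.factorial_ne_zero (n + k))
  have hy0 : (0 : ℝ) ≤ |y| := abs_nonneg y
  have hk2 : (k : ℝ) ≤ 2 ^ k := by exact_mod_cast (Nat.lt_two_pow_self (n := k)).le
  have hpos : (0 : ℝ) < (k.factorial : ℝ) * ((n + k).factorial : ℝ) := by positivity
  have hyR : |y| ^ (k - 1) ≤ R ^ k :=
    le_trans (pow_le_pow_left₀ hy0 hy _) (pow_le_pow_right₀ hR (Nat.sub_le k 1))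
  calc ‖(k : ℝ) * y ^ (k - 1) / ((k.factorial : ℝ) * ((n + k).factorial : ℝ))‖
      = (k : ℝ) * |y| ^ (k - 1) / ((k.factorial : ℝ) * ((n + k).factorial : ℝ)) := by
        rw [Real.norm_eq_abs, abs_div, abs_mul, abs_pow, Nat.abs_cast, abs_of_pos hpos]
    _ ≤ (k : ℝ) * |y| ^ (k - 1) / ((k.factorial : ℝ) * 1) := by gcongr
    _ = (k : ℝ) * |y| ^ (k - 1) / (k.factorial : ℝ) := by rw [mul_one]
    _ ≤ (2 ^ k) * R ^ k / (k.factorial : ℝ) := by gcongr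
    _ = (2 * R) ^ k / (k.factorial : ℝ) := by rw [mul_pow]

lemma hgAux_hasDerivAt (n : ℕ) (x : ℝ) : HasDerivAt (hgAux n) (hgAux (n + 1) x) x := by
  set R : ℝ := |x| + 1 with hRdef
  have hR : (1 : ℝ) ≤ R := by have := abs_nonneg x; linarith
  have hxR : x ∈ Metric.ball (0 : ℝ) R := by
    simp only [Metric.mem_ball, dist_zero_right, Real.norm_eq_abs]
    linarith
  have key := hasDerivAt_tsum_of_isPreconnected
    (u := fun k : ℕ => (2 * R) ^ k / (k.factorial : ℝ))
    (g := fun (k : ℕ) (y : ℝ) => y ^ k / ((k.factorial : ℝ) * ((n + k).factorial : ℝ)))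
    (g' := fun (k : ℕ) (y : ℝ) => (k : ℝ) * y ^ (k - 1) / ((k.factorial : ℝ) * ((n + k).factorial : ℝ)))
    (Real.summable_pow_div_factorial (2 * R)) Metric.isOpen_ball
    (convex_ball (0:ℝ) R).isPreconnected
    (fun k y _ => (hasDerivAt_pow k y).div_const _)
    (fun k y hyb => by
      refine hgAux_deriv_bound n R hR y ?_ k
      simp only [Metric.mem_ball, dist_zero_right, Real.norm_eq_abs] at hyb
      exact hyb.le)
    hxR (hgAux_summable n x) hxR
  have hsum : (∑' k : ℕ, (k : ℝ) * x ^ (k - 1) / ((k.factorial : ℝ) * ((n + k).factorial : ℝ)))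
      = hgAux (n + 1) x := by
    have hS : Summable fun k : ℕ =>
        (k : ℝ) * x ^ (k - 1) / ((k.factorial : ℝ) * ((n + k).factorial : ℝ)) := by
      apply Summable.of_norm_bounded (Real.summable_pow_div_factorial (2 * R))
      exact fun k => hgAux_deriv_bound n R hR x (by linarith [abs_nonneg x]) k
    rw [Summable.tsum_eq_zero_add hS]
    simp only [Nat.cast_zero, zero_mul, zero_div, zero_add]
    rw [hgAux]
    refine tsum_congr fun m => ?_
    have e1 : n + (m + 1) = n + 1 + m := by omega
    have e2 : ((m + 1).factorial : ℝ) = (m + 1) * (m.factorial : ℝ) := by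
      exact_mod_cast Nat.factorial_succ m
    rw [e1, e2]
    have hm : ((m : ℝ) + 1) ≠ 0 := by positivity
    have hmf : (m.factorial : ℝ) ≠ 0 := by positivity
    have hnf : (((n + 1 + m).factorial : ℝ)) ≠ 0 := by positivity
    push_cast
    field_simp
  rw [← hsum]
  exact key

lemma hgAux_rec (n : ℕ) (x : ℝ) :
    hgAux n x = x * hgAux (n + 2) x + ((n : ℝ) + 1) * hgAux (n + 1) x := by
  have hC : Summable fun m : ℕ =>
      x ^ (m + 1) / (((m + 1).factorial : ℝ) * ((n + 1 + (m + 1)).factorial : ℝ)) :=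
    (summable_nat_add_iff
      (f := fun k : ℕ => x ^ k / ((k.factorial : ℝ) * ((n + 1 + k).factorial : ℝ))) 1).2
      (hgAux_summable (n + 1) x)
  have hB : Summable fun m : ℕ =>
      x * (x ^ m / ((m.factorial : ℝ) * ((n + 2 + m).factorial : ℝ))) :=
    (hgAux_summable (n + 2) x).mul_left x
  rw [hgAux, hgAux, hgAux, Summable.tsum_eq_zero_add (hgAux_summable n x),
    Summable.tsum_eq_zero_add (hgAux_summable (n + 1) x), ← tsum_mul_left, mul_add, ← tsum_mul_left]
  have key : (∑' m : ℕ, x ^ (m + 1) / (((m + 1).factorial : ℝ) * ((n + (m + 1)).factorial : ℝ)))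
      = (∑' m : ℕ, x * (x ^ m / ((m.factorial : ℝ) * ((n + 2 + m).factorial : ℝ))))
        + ∑' m : ℕ, ((n : ℝ) + 1) *
            (x ^ (m + 1) / (((m + 1).factorial : ℝ) * ((n + 1 + (m + 1)).factorial : ℝ))) := by
    rw [← Summable.tsum_add hB (hC.mul_left _)]
    refine tsum_congr fun m => ?_
    have e1 : n + (m + 1) = n + m + 1 := by omega
    have e2 : n + 2 + m = n + m + 2 := by omega
    have e3 : n + 1 + (m + 1) = n + m + 2 := by omega
    rw [e1, e2, e3]
    have f1 : ((m + 1).factorial : ℝ) = ((m : ℝ) + 1) * (m.factorial : ℝ) := by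
      exact_mod_cast Nat.factorial_succ m
    have f2 : ((n + m + 2).factorial : ℝ) = ((n : ℝ) + (m : ℝ) + 2) * ((n + m + 1).factorial : ℝ) := by
      have : n + m + 2 = (n + m + 1) + 1 := rfl
      rw [this]
      push_cast [Nat.factorial_succ]
      ring
    rw [f1, f2]
    have hm : ((m : ℝ) + 1) ≠ 0 := by positivity
    have hmf : (m.factorial : ℝ) ≠ 0 := by positivity
    have hnm : ((n : ℝ) + (m : ℝ) + 2) ≠ 0 := by positivity
    have hnf : (((n + m + 1).factorial : ℝ)) ≠ 0 := by positivity
    field_simp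
    ring
  rw [key]
  have c0 : ((n : ℝ) + 1) * (x ^ 0 / (((0:ℕ).factorial : ℝ) * ((n + 1 + 0).factorial : ℝ)))
      = x ^ 0 / (((0:ℕ).factorial : ℝ) * ((n + 0).factorial : ℝ)) := by
    simp only [pow_zero, Nat.factorial_zero, Nat.cast_one, one_mul, add_zero]
    have : ((n + 1).factorial : ℝ) = ((n : ℝ) + 1) * (n.factorial : ℝ) := by
      exact_mod_cast Nat.factorial_succ n
    rw [this]
    have hn : ((n : ℝ) + 1) ≠ 0 := by positivity
    have hnf : (n.factorial : ℝ) ≠ 0 := by positivity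
    field_simp
  rw [← c0]
  ring

lemma besselI_nat (n : ℕ) (x : ℝ) (hx : 0 < x) :
    besselI (n : ℝ) (2 * Real.sqrt x) = Real.sqrt x ^ n * hgAux n x := by
  have hs : (0 : ℝ) < Real.sqrt x := Real.sqrt_pos.2 hx
  rw [besselI, hgAux, ← tsum_mul_left]
  refine tsum_congr fun k => ?_
  have h2 : (2 : ℝ) * Real.sqrt x / 2 = Real.sqrt x := by ring
  rw [h2]
  have hΓ : Real.Gamma ((n : ℝ) + (k : ℝ) + 1) = ((n + k).factorial : ℝ) := by
    rw [show ((n : ℝ) + (k : ℝ) + 1) = ((n + k : ℕ) : ℝ) + 1 by push_cast; ring]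
    exact_mod_cast Real.Gamma_nat_eq_factorial (n + k)
  have hpow : Real.sqrt x ^ ((n : ℝ) + 2 * (k : ℝ)) = Real.sqrt x ^ n * x ^ k := by
    rw [show ((n : ℝ) + 2 * (k : ℝ)) = ((n + 2 * k : ℕ) : ℝ) by push_cast; ring,
      Real.rpow_natCast, pow_add, pow_mul, Real.sq_sqrt hx.le]
  rw [hpow, hΓ]
  ring

lemma hankelY_two_eq (x : ℝ) (hx : 0 < x) :
    hankelY 2 x = hgAux 2 x ^ 2 - hgAux 1 x * hgAux 3 x := by
  have hs : (0 : ℝ) < Real.sqrt x := Real.sqrt_pos.2 hx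
  have hsq : Real.sqrt x ^ 2 = x := Real.sq_sqrt hx.le
  rw [hankelY]
  erw [Matrix.det_fin_two]
  have b1 : besselI ((((0 : Fin 2) : ℕ) : ℝ) + (((0 : Fin 2) : ℕ) : ℝ) + 1) (2 * Real.sqrt x)
      = Real.sqrt x ^ 1 * hgAux 1 x := by
    rw [show ((((0 : Fin 2) : ℕ) : ℝ) + (((0 : Fin 2) : ℕ) : ℝ) + 1) = ((1 : ℕ) : ℝ) by norm_num]
    exact besselI_nat 1 x hx
  have b2 : besselI ((((0 : Fin 2) : ℕ) : ℝ) + (((1 : Fin 2) : ℕ) : ℝ) + 1) (2 * Real.sqrt x)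
      = Real.sqrt x ^ 2 * hgAux 2 x := by
    rw [show ((((0 : Fin 2) : ℕ) : ℝ) + (((1 : Fin 2) : ℕ) : ℝ) + 1) = ((2 : ℕ) : ℝ) by norm_num]
    exact besselI_nat 2 x hx
  have b2' : besselI ((((1 : Fin 2) : ℕ) : ℝ) + (((0 : Fin 2) : ℕ) : ℝ) + 1) (2 * Real.sqrt x)
      = Real.sqrt x ^ 2 * hgAux 2 x := by
    rw [show ((((1 : Fin 2) : ℕ) : ℝ) + (((0 : Fin 2) : ℕ) : ℝ) + 1) = ((2 : ℕ) : ℝ) by norm_num]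
    exact besselI_nat 2 x hx
  have b3 : besselI ((((1 : Fin 2) : ℕ) : ℝ) + (((1 : Fin 2) : ℕ) : ℝ) + 1) (2 * Real.sqrt x)
      = Real.sqrt x ^ 3 * hgAux 3 x := by
    rw [show ((((1 : Fin 2) : ℕ) : ℝ) + (((1 : Fin 2) : ℕ) : ℝ) + 1) = ((3 : ℕ) : ℝ) by norm_num]
    exact besselI_nat 3 x hx
  rw [b1, b2, b2', b3]
  have hexp : x ^ (-(((2 : ℕ) : ℝ) ^ 2) / 2) = x ^ (-2 : ℝ) := by norm_num
  rw [hexp]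
  have hpow14 : Real.sqrt x ^ 1 * Real.sqrt x ^ 3 = x ^ 2 := by
    have h' : Real.sqrt x ^ 1 * Real.sqrt x ^ 3 = (Real.sqrt x ^ 2) ^ 2 := by ring
    rw [h', hsq]
  have h22 : Real.sqrt x ^ 2 * Real.sqrt x ^ 2 = x ^ 2 := by rw [hsq]; ring
  have hx2 : x ^ (-2 : ℝ) * x ^ 2 = 1 := by
    rw [← Real.rpow_natCast x 2, ← Real.rpow_add hx]
    norm_num
  have hnum : ((2 : ℕ) * (2 - 1) / 2) = 1 := rfl
  rw [hnum, pow_one]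
  have expand : Real.sqrt x ^ 1 * hgAux 1 x * (Real.sqrt x ^ 3 * hgAux 3 x)
      - Real.sqrt x ^ 2 * hgAux 2 x * (Real.sqrt x ^ 2 * hgAux 2 x)
      = x ^ 2 * (hgAux 1 x * hgAux 3 x - hgAux 2 x ^ 2) := by
    linear_combination hgAux 1 x * hgAux 3 x * hpow14 - hgAux 2 x * hgAux 2 x * h22
  rw [expand]
  have : (-1 : ℝ) * x ^ (-2 : ℝ) * (x ^ 2 * (hgAux 1 x * hgAux 3 x - hgAux 2 x ^ 2))
      = -1 * (x ^ (-2 : ℝ) * x ^ 2) * (hgAux 1 x * hgAux 3 x - hgAux 2 x ^ 2) := by ring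
  rw [this, hx2]
  ring

noncomputable def hF (x : ℝ) : ℝ := hgAux 2 x ^ 2 - hgAux 1 x * hgAux 3 x
noncomputable def hF1 (x : ℝ) : ℝ := hgAux 2 x * hgAux 3 x - hgAux 1 x * hgAux 4 x
noncomputable def hF2 (x : ℝ) : ℝ := hgAux 3 x ^ 2 - hgAux 1 x * hgAux 5 x
noncomputable def hF3 (x : ℝ) : ℝ :=
  2 * hgAux 3 x * hgAux 4 x - hgAux 2 x * hgAux 5 x - hgAux 1 x * hgAux 6 x

lemma hF_hasDeriv (x : ℝ) : HasDerivAt hF (hF1 x) x := by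
  have h1 := hgAux_hasDerivAt 1 x
  have h2 := hgAux_hasDerivAt 2 x
  have h3 := hgAux_hasDerivAt 3 x
  have H := (h2.pow 2).sub (h1.mul h3)
  refine H.congr_deriv ?_
  simp only [hF1]
  push_cast
  ring

lemma hF1_hasDeriv (x : ℝ) : HasDerivAt hF1 (hF2 x) x := by
  have h1 := hgAux_hasDerivAt 1 x
  have h2 := hgAux_hasDerivAt 2 x
  have h3 := hgAux_hasDerivAt 3 x
  have h4 := hgAux_hasDerivAt 4 x
  have H := (h2.mul h3).sub (h1.mul h4)
  refine H.congr_deriv ?_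
  simp only [hF2]
  ring

lemma hF2_hasDeriv (x : ℝ) : HasDerivAt hF2 (hF3 x) x := by
  have h1 := hgAux_hasDerivAt 1 x
  have h3 := hgAux_hasDerivAt 3 x
  have h5 := hgAux_hasDerivAt 5 x
  have H := (h3.pow 2).sub (h1.mul h5)
  refine H.congr_deriv ?_
  simp only [hF3]
  push_cast
  ring

lemma deriv_hankel₁ (y : ℝ) (hy : 0 < y) : deriv (hankelY 2) y = hF1 y := by
  have hev : hankelY 2 =ᶠ[nhds y] hF := by
    filter_upwards [isOpen_Ioi.mem_nhds hy] with z hz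
    rw [hankelY_two_eq z hz, hF]
  rw [hev.deriv_eq, (hF_hasDeriv y).deriv]

lemma deriv_hankel₂ (y : ℝ) (hy : 0 < y) : deriv (deriv (hankelY 2)) y = hF2 y := by
  have hev : deriv (hankelY 2) =ᶠ[nhds y] hF1 := by
    filter_upwards [isOpen_Ioi.mem_nhds hy] with z hz
    exact deriv_hankel₁ z hz
  rw [hev.deriv_eq, (hF1_hasDeriv y).deriv]

lemma deriv_hankel₃ (y : ℝ) (hy : 0 < y) : deriv (deriv (deriv (hankelY 2))) y = hF3 y := by
  have hev : deriv (deriv (hankelY 2)) =ᶠ[nhds y] hF2 := by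
    filter_upwards [isOpen_Ioi.mem_nhds hy] with z hz
    exact deriv_hankel₂ z hz
  rw [hev.deriv_eq, (hF2_hasDeriv y).deriv]

/-- The case `l = 2`: `x²y⁽³⁾ + 10xy″ + (20 − 4x)y′ − 10y = 0` for
`y(x) = −x^{−2} det[I_{j+k+1}(2√x)]_{j,k=0,1}`. -/
theorem hankelY_two_third_order_ODE :
    ∀ x : ℝ, 0 < x →
      x ^ 2 * iteratedDeriv 3 (hankelY 2) x
        + 10 * x * iteratedDeriv 2 (hankelY 2) x
        + (20 - 4 * x) * deriv (hankelY 2) x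
        - 10 * hankelY 2 x = 0 := by
  intro x hx
  have e3 : iteratedDeriv 3 (hankelY 2) x = deriv (deriv (deriv (hankelY 2))) x := by
    rw [iteratedDeriv_succ, iteratedDeriv_succ, iteratedDeriv_one]
  have e2 : iteratedDeriv 2 (hankelY 2) x = deriv (deriv (hankelY 2)) x := by
    rw [iteratedDeriv_succ, iteratedDeriv_one]
  rw [e3, e2, deriv_hankel₃ x hx, deriv_hankel₂ x hx, deriv_hankel₁ x hx,
    hankelY_two_eq x hx]
  simp only [hF1, hF2, hF3]
  have r1 : hgAux 1 x = x * hgAux 3 x + 2 * hgAux 2 x := by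
    have h := hgAux_rec 1 x; norm_num at h; exact h
  have r2 : hgAux 2 x = x * hgAux 4 x + 3 * hgAux 3 x := by
    have h := hgAux_rec 2 x; norm_num at h; exact h
  have r3 : hgAux 3 x = x * hgAux 5 x + 4 * hgAux 4 x := by
    have h := hgAux_rec 3 x; norm_num at h; exact h
  have r4 : hgAux 4 x = x * hgAux 6 x + 5 * hgAux 5 x := by
    have h := hgAux_rec 4 x; norm_num at h; exact h
  rw [r1, r2, r3, r4]
  ring
end

section
/- Let α ≥ 0 be real, l ≥ 1 an integer, and Y = (m_1, …, m_h) a partition (Young diagram) with at most l parts (h ≤ l, m_1 ≥ ⋯ ≥ m_h ≥ 1 integers), of weight m := m_1 + ⋯ + m_h; set m_i := 0 for i > h. For x > 0 let M(x) := [ I_{j+k+α+m_{l−k}}(2√x) ]_{j,k=0,…,l−1}, τ(x) := det M(x), and T₁τ(x) := Tr( adj(M(x)) · [ I_{j+k+α+m_{l−k}+1}(2√x) ]_{j,k=0,…,l−1} ), where adj denotes the adjugate matrix. Then for all x > 0, T₁τ(x) = √x τ′(x) − ((l² + m + l(α−1))/(2√x)) τ(x). -/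
open Real Matrix

namespace T1aux

noncomputable def c (ν : ℝ) (k : ℕ) : ℝ := 1 / ((k.factorial : ℝ) * Real.Gamma (ν + k + 1))

noncomputable def F (ν : ℝ) (x : ℝ) : ℝ := ∑' k : ℕ, x ^ k * c ν k

lemma gamma_lb {ν : ℝ} (hν : 0 ≤ ν) (k : ℕ) :
    (k.factorial : ℝ) * Real.Gamma (ν + 1) ≤ Real.Gamma (ν + k + 1) := by
  induction k with
  | zero => simp
  | succ k ih =>
    have hpos : (0:ℝ) < ν + k + 1 := by positivity
    have hΓ : 0 < Real.Gamma (ν + k + 1) := Real.Gamma_pos_of_pos hpos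
    have hstep : Real.Gamma (ν + (k+1:ℕ) + 1) = (ν + k + 1) * Real.Gamma (ν + k + 1) := by
      rw [show (ν + (k+1:ℕ) + 1 : ℝ) = (ν + k + 1) + 1 by push_cast; ring,
        Real.Gamma_add_one hpos.ne']
    rw [hstep]
    have h1 : ((k+1:ℕ) : ℝ) ≤ ν + k + 1 := by push_cast; linarith
    calc ((k+1).factorial : ℝ) * Real.Gamma (ν + 1)
        = ((k+1:ℕ):ℝ) * ((k.factorial : ℝ) * Real.Gamma (ν + 1)) := by
          rw [Nat.factorial_succ]; push_cast; ring
      _ ≤ ((k+1:ℕ):ℝ) * Real.Gamma (ν + k + 1) := by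
          apply mul_le_mul_of_nonneg_left ih (by positivity)
      _ ≤ (ν + k + 1) * Real.Gamma (ν + k + 1) := by
          apply mul_le_mul_of_nonneg_right h1 hΓ.le

lemma Gamma_pos {ν : ℝ} (hν : 0 ≤ ν) (k : ℕ) : 0 < Real.Gamma (ν + k + 1) :=
  Real.Gamma_pos_of_pos (by positivity)

lemma Gamma1_pos {ν : ℝ} (hν : 0 ≤ ν) : 0 < Real.Gamma (ν + 1) :=
  Real.Gamma_pos_of_pos (by linarith)

lemma c_pos {ν : ℝ} (hν : 0 ≤ ν) (k : ℕ) : 0 < c ν k := by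
  have h1 := Gamma_pos hν k
  have h2 : (0:ℝ) < k.factorial := by positivity
  unfold c; positivity

lemma c_le {ν : ℝ} (hν : 0 ≤ ν) (k : ℕ) :
    c ν k ≤ 1 / Real.Gamma (ν + 1) * (1 / (k.factorial : ℝ)) := by
  have hf : (0:ℝ) < k.factorial := by positivity
  have hf1 : (1:ℝ) ≤ k.factorial := by exact_mod_cast k.factorial_pos
  have hΓ1 := Gamma1_pos hν
  have hlb := gamma_lb hν k
  unfold c
  rw [one_div_mul_one_div, div_le_div_iff₀ (by nlinarith [Gamma_pos hν k]) (by positivity)]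
  nlinarith [mul_le_mul_of_nonneg_left hlb hf.le, mul_le_mul_of_nonneg_right hf1 (mul_pos hf hΓ1).le]

lemma k_mul_c_le {ν : ℝ} (hν : 0 ≤ ν) (k : ℕ) :
    (k : ℝ) * c ν k ≤ 1 / Real.Gamma (ν + 1) * (1 / (k.factorial : ℝ)) := by
  have hf : (0:ℝ) < k.factorial := by positivity
  have hkf : (k:ℝ) ≤ k.factorial := by exact_mod_cast k.self_le_factorial
  have hΓ1 := Gamma1_pos hν
  have hΓ := Gamma_pos hν k
  have hlb := gamma_lb hν k
  unfold c
  rw [one_div_mul_one_div, mul_one_div, div_le_div_iff₀ (by nlinarith) (by positivity)]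
  have hk0 : (0:ℝ) ≤ k := k.cast_nonneg
  nlinarith [mul_le_mul_of_nonneg_left hlb hk0, mul_le_mul_of_nonneg_right hkf (by positivity : (0:ℝ) ≤ (k.factorial:ℝ) * Real.Gamma (ν+1))]

lemma summable_F {ν : ℝ} (hν : 0 ≤ ν) (y : ℝ) : Summable (fun k : ℕ => y ^ k * c ν k) := by
  apply Summable.of_norm_bounded
    (((Real.summable_pow_div_factorial |y|).mul_left (1 / Real.Gamma (ν+1))))
  intro k
  rw [norm_mul, norm_pow, Real.norm_eq_abs, Real.norm_eq_abs, abs_of_nonneg (c_pos hν k).le]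
  calc |y| ^ k * c ν k ≤ |y| ^ k * (1 / Real.Gamma (ν+1) * (1 / (k.factorial:ℝ))) :=
        mul_le_mul_of_nonneg_left (c_le hν k) (by positivity)
    _ = 1 / Real.Gamma (ν+1) * (|y| ^ k / (k.factorial:ℝ)) := by ring

lemma hasDerivAt_F {ν : ℝ} (hν : 0 ≤ ν) (x : ℝ) : HasDerivAt (F ν) (F (ν+1) x) x := by
  set R : ℝ := |x| + 1 with hR
  have hR1 : (1:ℝ) ≤ R := by rw [hR]; linarith [abs_nonneg x]
  have hR0 : (0:ℝ) < R := by positivity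
  have hxR : x ∈ Set.Ioo (-R) R := by constructor <;> cases abs_lt.1 (show |x| < R by simp [hR]) <;> linarith [le_abs_self x, neg_abs_le x]
  have hbound : ∀ (k : ℕ) (y : ℝ), y ∈ Set.Ioo (-R) R →
      ‖((k:ℝ) * y ^ (k-1)) * c ν k‖ ≤ 1 / Real.Gamma (ν+1) * (R ^ k / (k.factorial:ℝ)) := by
    intro k y hy
    have hyR : |y| ≤ R := by
      rw [abs_le]; exact ⟨hy.1.le, hy.2.le⟩
    have h1 : ‖((k:ℝ) * y ^ (k-1)) * c ν k‖ = (k:ℝ) * |y| ^ (k-1) * c ν k := by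
      rw [norm_mul, norm_mul, Real.norm_eq_abs, Real.norm_eq_abs, Real.norm_eq_abs,
        abs_of_nonneg (c_pos hν k).le, Nat.abs_cast, abs_pow]
    rw [h1]
    have h2 : |y| ^ (k-1) ≤ R ^ k := by
      calc |y| ^ (k-1) ≤ R ^ (k-1) := pow_le_pow_left₀ (abs_nonneg y) hyR _
        _ ≤ R ^ k := pow_le_pow_right₀ hR1 (Nat.sub_le k 1)
    calc (k:ℝ) * |y| ^ (k-1) * c ν k ≤ (k:ℝ) * R ^ k * c ν k := by
          have := mul_le_mul_of_nonneg_left h2 (k.cast_nonneg (α := ℝ))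
          exact mul_le_mul_of_nonneg_right this (c_pos hν k).le
      _ = R ^ k * ((k:ℝ) * c ν k) := by ring
      _ ≤ R ^ k * (1 / Real.Gamma (ν+1) * (1 / (k.factorial:ℝ))) :=
          mul_le_mul_of_nonneg_left (k_mul_c_le hν k) (by positivity)
      _ = 1 / Real.Gamma (ν+1) * (R ^ k / (k.factorial:ℝ)) := by ring
  have hder : HasDerivAt (F ν) (∑' k : ℕ, ((k:ℝ) * x ^ (k-1)) * c ν k) x := by
    apply hasDerivAt_tsum_of_isPreconnected
      ((Real.summable_pow_div_factorial R).mul_left (1 / Real.Gamma (ν+1)))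
      isOpen_Ioo isPreconnected_Ioo
      (fun k y _ => ((hasDerivAt_pow k y).mul_const (c ν k)))
      hbound hxR (summable_F hν x) hxR
  have hsum' : Summable (fun k : ℕ => ((k:ℝ) * x ^ (k-1)) * c ν k) := by
    apply Summable.of_norm_bounded
      ((Real.summable_pow_div_factorial R).mul_left (1 / Real.Gamma (ν+1)))
    exact fun k => hbound k x hxR
  have heq : (∑' k : ℕ, ((k:ℝ) * x ^ (k-1)) * c ν k) = F (ν+1) x := by
    rw [hsum'.tsum_eq_zero_add]
    simp only [Nat.cast_zero, zero_mul, zero_add]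
    unfold F
    apply tsum_congr
    intro k
    have hfact : ((k+1).factorial : ℝ) = (k+1 : ℝ) * k.factorial := by
      rw [Nat.factorial_succ]; push_cast; ring
    have hΓarg : (ν + (k+1:ℕ) + 1 : ℝ) = (ν+1) + k + 1 := by push_cast; ring
    unfold c
    rw [hΓarg]
    push_cast
    rw [hfact]
    have hf : (0:ℝ) < k.factorial := by positivity
    field_simp
  rw [heq] at hder
  exact hder


lemma besselI_eq {ν : ℝ} (hν : 0 ≤ ν) {x : ℝ} (hx : 0 < x) :
    besselI ν (2 * Real.sqrt x) = x ^ (ν/2 : ℝ) * F ν x := by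
  have hs : (0:ℝ) < Real.sqrt x := Real.sqrt_pos.2 hx
  unfold besselI F
  rw [← tsum_mul_left]
  apply tsum_congr
  intro k
  have h2 : (2 * Real.sqrt x) / 2 = Real.sqrt x := by ring
  rw [h2]
  have hpow : (Real.sqrt x) ^ (ν + 2 * (k:ℝ)) = x ^ (ν/2 : ℝ) * x ^ k := by
    rw [Real.rpow_add hs]
    congr 1
    · rw [Real.sqrt_eq_rpow, ← Real.rpow_mul hx.le]
      ring_nf
    · rw [show (2 * (k:ℝ)) = ((2*k : ℕ) : ℝ) by push_cast; ring, Real.rpow_natCast,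
        pow_mul, Real.sq_sqrt hx.le]
  rw [hpow]
  unfold c
  ring

lemma hasDerivAt_besselI_sqrt {ν : ℝ} (hν : 0 ≤ ν) {x : ℝ} (hx : 0 < x) :
    HasDerivAt (fun t => besselI ν (2 * Real.sqrt t))
      ((1 / Real.sqrt x) * besselI (ν+1) (2 * Real.sqrt x)
        + (ν / (2*x)) * besselI ν (2 * Real.sqrt x)) x := by
  have hs : (0:ℝ) < Real.sqrt x := Real.sqrt_pos.2 hx
  have h1 : HasDerivAt (fun t : ℝ => t ^ (ν/2 : ℝ) * F ν t)
      ((ν/2) * x ^ (ν/2 - 1 : ℝ) * F ν x + x ^ (ν/2 : ℝ) * F (ν+1) x) x :=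
    (Real.hasDerivAt_rpow_const (Or.inl hx.ne')).mul (hasDerivAt_F hν x)
  have heq : (fun t => besselI ν (2 * Real.sqrt t)) =ᶠ[nhds x] (fun t : ℝ => t ^ (ν/2 : ℝ) * F ν t) := by
    filter_upwards [Ioi_mem_nhds hx] with t ht
    exact besselI_eq hν ht
  have h2 := h1.congr_of_eventuallyEq heq
  refine h2.congr_deriv ?_
  rw [besselI_eq hν hx, besselI_eq (by linarith : (0:ℝ) ≤ ν + 1) hx]
  have e1 : x ^ ((ν+1)/2 : ℝ) = x ^ (ν/2 : ℝ) * Real.sqrt x := by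
    rw [show ((ν+1)/2 : ℝ) = ν/2 + 1/2 by ring, Real.rpow_add hx, ← Real.sqrt_eq_rpow]
  have e2 : x ^ (ν/2 - 1 : ℝ) = x ^ (ν/2 : ℝ) / x := by
    rw [Real.rpow_sub hx, Real.rpow_one]
  rw [e1, e2]
  field_simp
  ring

lemma det_updateCol_eq (n : ℕ) (A N : Matrix (Fin n) (Fin n) ℝ) (i : Fin n) :
    (A.updateCol i fun j => N j i).det = ∑ j, adjugate A i j * N j i := by
  have hb : (fun j => N j i) = ∑ j : Fin n, (N j i) • (Pi.single j 1 : Fin n → ℝ) := by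
    funext r
    simp [Pi.single_apply]
  rw [← cramer_apply, hb, map_sum]
  simp only [_root_.map_smul, Finset.sum_apply, Pi.smul_apply, smul_eq_mul]
  apply Finset.sum_congr rfl
  intro j _
  have hc : cramer A (Pi.single j 1) i = adjugate A i j := by
    have := Matrix.adjugate_def Aᵀ
    calc cramer A (Pi.single j 1) i = cramer (Aᵀ)ᵀ (Pi.single j 1) i := by rw [transpose_transpose]
      _ = adjugate Aᵀ j i := by rw [Matrix.adjugate_def Aᵀ]; rfl
      _ = (adjugate A)ᵀ j i := by rw [Matrix.adjugate_transpose]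
      _ = adjugate A i j := rfl
  rw [hc, mul_comm]

lemma sum_det_updateCol (n : ℕ) (A N : Matrix (Fin n) (Fin n) ℝ) :
    ∑ i, (A.updateCol i fun j => N j i).det = Matrix.trace (adjugate A * N) := by
  rw [Matrix.trace]
  apply Finset.sum_congr rfl
  intro i _
  rw [det_updateCol_eq, Matrix.diag, Matrix.mul_apply]

lemma hasDerivAt_det {n : ℕ} (Mf : ℝ → Matrix (Fin n) (Fin n) ℝ)
    (N : Matrix (Fin n) (Fin n) ℝ) (x : ℝ)
    (hM : ∀ i j, HasDerivAt (fun t => Mf t i j) (N i j) x) :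
    HasDerivAt (fun t => (Mf t).det) (Matrix.trace (adjugate (Mf x) * N)) x := by
  have h1 : HasDerivAt (fun t => (Mf t).det)
      (∑ σ : Equiv.Perm (Fin n), ((Equiv.Perm.sign σ : ℤ) : ℝ) *
        ∑ i, (∏ j ∈ Finset.univ.erase i, Mf x (σ j) j) • N (σ i) i) x := by
    simp only [Matrix.det_apply']
    exact HasDerivAt.fun_sum fun σ _ =>
      (HasDerivAt.fun_finsetProd fun i _ => hM (σ i) i).const_mul _
  convert h1 using 1
  rw [← sum_det_updateCol]
  have key : ∀ i : Fin n, ((Mf x).updateCol i fun j => N j i).det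
      = ∑ σ : Equiv.Perm (Fin n), ((Equiv.Perm.sign σ : ℤ) : ℝ) *
          ((∏ j ∈ Finset.univ.erase i, Mf x (σ j) j) • N (σ i) i) := by
    intro i
    rw [Matrix.det_apply']
    apply Finset.sum_congr rfl
    intro σ _
    congr 1
    rw [smul_eq_mul, ← Finset.mul_prod_erase Finset.univ _ (Finset.mem_univ i), mul_comm]
    congr 1
    · apply Finset.prod_congr rfl
      intro j hj
      rw [Matrix.updateCol_apply, if_neg (Finset.ne_of_mem_erase hj)]
    · simp [Matrix.updateCol_apply]
  simp_rw [key]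
  rw [Finset.sum_comm]
  apply Finset.sum_congr rfl
  intro σ _
  rw [Finset.mul_sum]

lemma deriv_det_bessel (n : ℕ) (a b : Fin n → ℝ) (ha : ∀ j, 0 ≤ a j) (hb : ∀ k, 0 ≤ b k)
    {x : ℝ} (hx : 0 < x) :
    Real.sqrt x *
        deriv (fun t => (Matrix.of fun j k : Fin n =>
          besselI (a j + b k) (2 * Real.sqrt t)).det) x
      = Matrix.trace (adjugate (Matrix.of fun j k : Fin n =>
            besselI (a j + b k) (2 * Real.sqrt x))
          * (Matrix.of fun j k : Fin n => besselI (a j + b k + 1) (2 * Real.sqrt x)))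
        + ((∑ j, a j + ∑ k, b k) / (2 * Real.sqrt x)) *
            (Matrix.of fun j k : Fin n => besselI (a j + b k) (2 * Real.sqrt x)).det := by
  have hs : (0:ℝ) < Real.sqrt x := Real.sqrt_pos.2 hx
  have hxx : Real.sqrt x * Real.sqrt x = x := Real.mul_self_sqrt hx.le
  set A : Matrix (Fin n) (Fin n) ℝ :=
    Matrix.of fun j k : Fin n => besselI (a j + b k) (2 * Real.sqrt x) with hA
  set B : Matrix (Fin n) (Fin n) ℝ :=
    Matrix.of fun j k : Fin n => besselI (a j + b k + 1) (2 * Real.sqrt x) with hB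
  set N : Matrix (Fin n) (Fin n) ℝ := Matrix.of fun j k : Fin n =>
    (1 / Real.sqrt x) * besselI (a j + b k + 1) (2 * Real.sqrt x)
      + ((a j + b k) / (2*x)) * besselI (a j + b k) (2 * Real.sqrt x) with hN
  have hder : HasDerivAt (fun t => (Matrix.of fun j k : Fin n =>
      besselI (a j + b k) (2 * Real.sqrt t)).det) (Matrix.trace (adjugate A * N)) x := by
    apply hasDerivAt_det
    intro i j
    exact hasDerivAt_besselI_sqrt (add_nonneg (ha i) (hb j)) hx
  rw [hder.deriv]
  have hNdecomp : N = (1 / Real.sqrt x) • B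
      + (Matrix.diagonal (fun j => a j / (2*x)) * A + A * Matrix.diagonal (fun k => b k / (2*x))) := by
    ext j k
    simp only [hN, hA, hB, Matrix.of_apply, Matrix.add_apply, Matrix.smul_apply,
      Matrix.diagonal_mul, Matrix.mul_diagonal, smul_eq_mul]
    ring
  have t2 : (adjugate A * ((Matrix.diagonal fun j => a j / (2*x)) * A)).trace
      = A.det * ((∑ j, a j) / (2*x)) := by
    rw [← Matrix.mul_assoc, Matrix.trace_mul_comm, ← Matrix.mul_assoc, Matrix.mul_adjugate,
      Matrix.smul_mul, Matrix.one_mul, Matrix.trace_smul, Matrix.trace_diagonal, smul_eq_mul,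
      ← Finset.sum_div]
  have t3 : (adjugate A * (A * Matrix.diagonal fun k => b k / (2*x))).trace
      = A.det * ((∑ k, b k) / (2*x)) := by
    rw [← Matrix.mul_assoc, Matrix.adjugate_mul, Matrix.smul_mul, Matrix.one_mul,
      Matrix.trace_smul, Matrix.trace_diagonal, smul_eq_mul, ← Finset.sum_div]
  have htr : Matrix.trace (adjugate A * N)
      = (1 / Real.sqrt x) * Matrix.trace (adjugate A * B)
        + (A.det * ((∑ j, a j) / (2*x)) + A.det * ((∑ k, b k) / (2*x))) := by
    rw [hNdecomp, Matrix.mul_add, Matrix.trace_add, Matrix.mul_add, Matrix.trace_add,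
      Matrix.mul_smul, Matrix.trace_smul, t2, t3, smul_eq_mul]
  rw [htr]
  set T := Matrix.trace (adjugate A * B) with hT
  set Sa := ∑ j, a j with hSa
  set Sb := ∑ k, b k with hSb
  set s := Real.sqrt x with hsdef
  field_simp
  rw [← hxx]
  ring

end T1aux

/-- For a Young diagram `Y = (m_1,…,m_h)` with at most `l` parts, of weight `m`, the
operation `T₁` on the shifted Hankel determinant
`τ(x) = det[I_{j+k+α+m_{l−k}}(2√x)]_{j,k=0,…,l−1}` satisfies
`T₁τ(x) = √x τ′(x) − ((l² + m + l(α−1))/(2√x)) τ(x)` for `x > 0`. -/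
theorem T1_shifted_hankel (α : ℝ) (hα : 0 ≤ α) (l : ℕ) (hl : 1 ≤ l)
    (h : ℕ) (hh : h ≤ l) (m : ℕ → ℕ)
    (hpos : ∀ i : ℕ, 1 ≤ i → i ≤ h → 1 ≤ m i)
    (hanti : ∀ i j : ℕ, 1 ≤ i → i ≤ j → j ≤ h → m j ≤ m i)
    (hzero : ∀ i : ℕ, h < i → m i = 0) :
    ∀ x : ℝ, 0 < x →
      Matrix.trace
          ((Matrix.adjugate (Matrix.of fun j k : Fin l =>
              besselI (((j : ℕ) : ℝ) + ((k : ℕ) : ℝ) + α + (m (l - (k : ℕ)) : ℝ))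
                (2 * Real.sqrt x)))
            * (Matrix.of fun j k : Fin l =>
              besselI (((j : ℕ) : ℝ) + ((k : ℕ) : ℝ) + α + (m (l - (k : ℕ)) : ℝ) + 1)
                (2 * Real.sqrt x)))
        = Real.sqrt x *
            deriv (fun t : ℝ => Matrix.det (Matrix.of fun j k : Fin l =>
              besselI (((j : ℕ) : ℝ) + ((k : ℕ) : ℝ) + α + (m (l - (k : ℕ)) : ℝ))
                (2 * Real.sqrt t))) x
          - (((l : ℝ) ^ 2 + (∑ i ∈ Finset.Icc 1 h, m i : ℕ) + (l : ℝ) * (α - 1))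
              / (2 * Real.sqrt x)) *
              Matrix.det (Matrix.of fun j k : Fin l =>
                besselI (((j : ℕ) : ℝ) + ((k : ℕ) : ℝ) + α + (m (l - (k : ℕ)) : ℝ))
                  (2 * Real.sqrt x)) := by
  intro x hx
  have e0 : ∀ t : ℝ, (Matrix.of fun j k : Fin l =>
      besselI (((j : ℕ) : ℝ) + ((k : ℕ) : ℝ) + α + (m (l - (k : ℕ)) : ℝ)) (2 * Real.sqrt t))
      = (Matrix.of fun j k : Fin l =>
      besselI (((j : ℕ) : ℝ) + (((k : ℕ) : ℝ) + α + (m (l - (k : ℕ)) : ℝ))) (2 * Real.sqrt t)) := by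
    intro t
    ext j k
    simp only [Matrix.of_apply]
    congr 1
    ring
  have e1 : (Matrix.of fun j k : Fin l =>
      besselI (((j : ℕ) : ℝ) + ((k : ℕ) : ℝ) + α + (m (l - (k : ℕ)) : ℝ) + 1) (2 * Real.sqrt x))
      = (Matrix.of fun j k : Fin l =>
      besselI (((j : ℕ) : ℝ) + (((k : ℕ) : ℝ) + α + (m (l - (k : ℕ)) : ℝ)) + 1) (2 * Real.sqrt x)) := by
    ext j k
    simp only [Matrix.of_apply]
    congr 1
    ring
  simp only [e0, e1]
  have haux : Real.sqrt x *
        deriv (fun t => (Matrix.of fun j k : Fin l =>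
          besselI (((j : ℕ) : ℝ) + (((k : ℕ) : ℝ) + α + (m (l - (k : ℕ)) : ℝ)))
            (2 * Real.sqrt t)).det) x
      = Matrix.trace (adjugate (Matrix.of fun j k : Fin l =>
            besselI (((j : ℕ) : ℝ) + (((k : ℕ) : ℝ) + α + (m (l - (k : ℕ)) : ℝ)))
              (2 * Real.sqrt x))
          * (Matrix.of fun j k : Fin l =>
            besselI (((j : ℕ) : ℝ) + (((k : ℕ) : ℝ) + α + (m (l - (k : ℕ)) : ℝ)) + 1)
              (2 * Real.sqrt x)))
        + (((∑ j : Fin l, ((j : ℕ) : ℝ))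
            + ∑ k : Fin l, (((k : ℕ) : ℝ) + α + (m (l - (k : ℕ)) : ℝ))) / (2 * Real.sqrt x)) *
            (Matrix.of fun j k : Fin l =>
              besselI (((j : ℕ) : ℝ) + (((k : ℕ) : ℝ) + α + (m (l - (k : ℕ)) : ℝ)))
                (2 * Real.sqrt x)).det :=
    T1aux.deriv_det_bessel l (fun j => ((j : ℕ) : ℝ))
      (fun k => ((k : ℕ) : ℝ) + α + (m (l - (k : ℕ)) : ℝ))
      (fun j => by positivity) (fun k => by positivity) hx
  have hG : (∑ j : Fin l, ((j : ℕ) : ℝ)) * 2 = (l : ℝ) * ((l : ℝ) - 1) := by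
    rw [Fin.sum_univ_eq_sum_range (fun i : ℕ => ((i : ℕ) : ℝ)) l]
    have h1 := Finset.sum_range_id_mul_two l
    have h2 : (((∑ i ∈ Finset.range l, i) * 2 : ℕ) : ℝ) = ((l * (l - 1) : ℕ) : ℝ) := by
      exact_mod_cast congrArg (Nat.cast : ℕ → ℝ) h1
    push_cast [Nat.cast_sub hl] at h2
    linarith [h2]
  have hMnat : ∑ k ∈ Finset.range l, m (l - k) = ∑ i ∈ Finset.Icc 1 h, m i := by
    have hsub : ∑ i ∈ Finset.Icc 1 h, m i = ∑ i ∈ Finset.Icc 1 l, m i := by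
      apply Finset.sum_subset (Finset.Icc_subset_Icc_right hh)
      intro i hi hni
      simp only [Finset.mem_Icc] at hi hni
      exact hzero i (by omega)
    rw [hsub]
    apply Finset.sum_nbij' (fun k => l - k) (fun i => l - i)
    · intro a ha
      simp only [Finset.mem_range] at ha
      simp only [Finset.mem_Icc]
      omega
    · intro a ha
      simp only [Finset.mem_Icc] at ha
      simp only [Finset.mem_range]
      omega
    · intro a ha
      simp only [Finset.mem_range] at ha
      omega
    · intro a ha
      simp only [Finset.mem_Icc] at ha
      omega
    · intro a _
      rfl
  have hM : (∑ k : Fin l, (m (l - (k : ℕ)) : ℝ)) = ((∑ i ∈ Finset.Icc 1 h, m i : ℕ) : ℝ) := by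
    rw [Fin.sum_univ_eq_sum_range (fun k : ℕ => (m (l - k) : ℝ)) l]
    exact_mod_cast congrArg (Nat.cast : ℕ → ℝ) hMnat
  have hS : (∑ j : Fin l, ((j : ℕ) : ℝ))
      + ∑ k : Fin l, (((k : ℕ) : ℝ) + α + (m (l - (k : ℕ)) : ℝ))
      = (l : ℝ) ^ 2 + ((∑ i ∈ Finset.Icc 1 h, m i : ℕ) : ℝ) + (l : ℝ) * (α - 1) := by
    rw [Finset.sum_add_distrib, Finset.sum_add_distrib, hM, Finset.sum_const,
      Finset.card_univ, Fintype.card_fin, nsmul_eq_mul]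
    linarith [hG]
  rw [hS] at haux
  linarith [haux]
end

section
/- Let α ≥ 0 be real and l ≥ 1 an integer. For x > 0 let A(x) := [ I_{j+k+α+1}(2√x) ]_{j,k=0,…,l−1} and B(x) := [ I_{j+k+α}(2√x) ]_{j,k=0,…,l−1}. Then for all x > 0, √x (d/dx) det A(x) + ((l² + lα)/(2√x)) det A(x) − Tr( adj(A(x)) · B(x) ) = 0. -/
open Real Matrix

lemma fact_gamma_le (ν : ℝ) (hν : 0 ≤ ν) : ∀ k : ℕ,
    (k.factorial : ℝ) * Real.Gamma (ν + 1) ≤ Real.Gamma (ν + k + 1) := by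
  intro k
  induction k with
  | zero => simp
  | succ k ih =>
    have hpos : (0:ℝ) < ν + k + 1 := by positivity
    have h1 : Real.Gamma (ν + (k+1:ℕ) + 1) = (ν + k + 1) * Real.Gamma (ν + k + 1) := by
      have := Real.Gamma_add_one (s := ν + k + 1) hpos.ne'
      rw [← this]; push_cast; ring_nf
    rw [h1]
    calc ((k+1).factorial : ℝ) * Real.Gamma (ν + 1)
        = (k+1 : ℝ) * ((k.factorial : ℝ) * Real.Gamma (ν + 1)) := by
          push_cast [Nat.factorial_succ]; ring
      _ ≤ (ν + k + 1) * Real.Gamma (ν + k + 1) := by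
          apply mul_le_mul (by linarith) ih
          · positivity
          · linarith

lemma gamma_term_pos (ν : ℝ) (hν : 0 ≤ ν) (k : ℕ) :
    (0:ℝ) < (k.factorial : ℝ) * Real.Gamma (ν + k + 1) := by
  have : (0:ℝ) < Real.Gamma (ν + k + 1) := Real.Gamma_pos_of_pos (by positivity)
  positivity

lemma summable_main (ν : ℝ) (hν : 0 ≤ ν) (C r : ℝ) (hC : 0 ≤ C) (hr : 0 ≤ r) :
    Summable (fun k : ℕ => (C + k) * r ^ k / ((k.factorial : ℝ) * Real.Gamma (ν + k + 1))) := by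
  have hΓ : (0:ℝ) < Real.Gamma (ν + 1) := Real.Gamma_pos_of_pos (by positivity)
  have hsum : Summable (fun k : ℕ => (C + 1) / Real.Gamma (ν + 1) * (r ^ k / k.factorial)) :=
    (Real.summable_pow_div_factorial r).mul_left _
  refine Summable.of_nonneg_of_le (fun k => ?_) (fun k => ?_) hsum
  · have := gamma_term_pos ν hν k
    positivity
  · have hfac : (0:ℝ) < k.factorial := by positivity
    have hΓk : (0:ℝ) < Real.Gamma (ν + k + 1) := Real.Gamma_pos_of_pos (by positivity)
    have hge : (k.factorial : ℝ) * Real.Gamma (ν + 1) ≤ Real.Gamma (ν + k + 1) :=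
      fact_gamma_le ν hν k
    have h1 : (C + k) * r ^ k / ((k.factorial : ℝ) * Real.Gamma (ν + k + 1))
        ≤ (C + k) * r ^ k / ((k.factorial : ℝ) * ((k.factorial : ℝ) * Real.Gamma (ν + 1))) := by
      apply div_le_div_of_nonneg_left (by positivity) (by positivity)
      exact mul_le_mul_of_nonneg_left hge hfac.le
    refine h1.trans ?_
    rw [div_le_iff₀ (by positivity)] at *
    have hCk : (C + (k:ℝ)) ≤ (C + 1) * k.factorial := by
      have h2 : (k:ℝ) ≤ k.factorial := by
        exact_mod_cast Nat.self_le_factorial k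
      have h3 : (1:ℝ) ≤ k.factorial := by exact_mod_cast Nat.one_le_iff_ne_zero.mpr (Nat.factorial_ne_zero k)
      nlinarith
    have hrk : (0:ℝ) ≤ r ^ k := by positivity
    calc (C + k) * r ^ k ≤ (C + 1) * k.factorial * r ^ k := by nlinarith
      _ = (C + 1) / Real.Gamma (ν + 1) * (r ^ k / ↑k.factorial) *
            (↑k.factorial * (↑k.factorial * Real.Gamma (ν + 1))) := by
          field_simp

lemma besselI_eq (ν t : ℝ) (ht : 0 < t) :
    besselI ν (2 * Real.sqrt t)
      = ∑' k : ℕ, t ^ ((ν + 2 * (k:ℝ)) / 2) / ((k.factorial : ℝ) * Real.Gamma (ν + k + 1)) := by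
  unfold besselI
  congr 1; funext k
  congr 1
  rw [mul_div_cancel_left₀ _ (two_ne_zero), Real.sqrt_eq_rpow, ← Real.rpow_mul ht.le]
  congr 1; ring

lemma summable_g (ν : ℝ) (hν : 0 ≤ ν) (x : ℝ) (hx : 0 < x) :
    Summable (fun k : ℕ => x ^ ((ν + 2 * (k:ℝ)) / 2) / ((k.factorial : ℝ) * Real.Gamma (ν + k + 1))) := by
  have hmain := (summable_main ν hν 1 x (by norm_num) hx.le).mul_left (x ^ (ν/2))
  refine Summable.of_nonneg_of_le (fun k => ?_) (fun k => ?_) hmain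
  · have := gamma_term_pos ν hν k
    positivity
  · have hc := gamma_term_pos ν hν k
    have hsplit : x ^ ((ν + 2 * (k:ℝ)) / 2) = x ^ (ν/2) * x ^ k := by
      rw [← Real.rpow_natCast x k, ← Real.rpow_add hx]
      congr 1; ring
    rw [hsplit]
    have h1 : x ^ k / ((k.factorial:ℝ) * Real.Gamma (ν + k + 1))
        ≤ (1 + (k:ℝ)) * x ^ k / ((k.factorial:ℝ) * Real.Gamma (ν + k + 1)) := by
      gcongr
      nlinarith [pow_nonneg hx.le k]
    calc x ^ (ν/2) * x ^ k / ((k.factorial:ℝ) * Real.Gamma (ν + k + 1))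
        = x ^ (ν/2) * (x ^ k / ((k.factorial:ℝ) * Real.Gamma (ν + k + 1))) := by ring
      _ ≤ x ^ (ν/2) * ((1 + (k:ℝ)) * x ^ k / ((k.factorial:ℝ) * Real.Gamma (ν + k + 1))) :=
          mul_le_mul_of_nonneg_left h1 (by positivity)

lemma hasDerivAt_besselI_sqrt (ν : ℝ) (hν : 1 ≤ ν) (x : ℝ) (hx : 0 < x) :
    HasDerivAt (fun t => besselI ν (2 * Real.sqrt t))
      ((besselI (ν - 1) (2 * Real.sqrt x)
        - ν / (2 * Real.sqrt x) * besselI ν (2 * Real.sqrt x)) / Real.sqrt x) x := by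
  have hν0 : 0 ≤ ν := by linarith
  have hcpos : ∀ k : ℕ, (0:ℝ) < (k.factorial : ℝ) * Real.Gamma (ν + k + 1) :=
    gamma_term_pos ν hν0
  set g : ℕ → ℝ → ℝ :=
    fun k t => t ^ ((ν + 2 * (k:ℝ)) / 2) / ((k.factorial : ℝ) * Real.Gamma (ν + k + 1)) with hgdef
  set g' : ℕ → ℝ → ℝ := fun k t => ((ν + 2 * (k:ℝ)) / 2) * t ^ ((ν + 2 * (k:ℝ)) / 2 - 1)
      / ((k.factorial : ℝ) * Real.Gamma (ν + k + 1)) with hg'def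
  set D : ℝ := max ((x/2) ^ (ν/2 - 1)) ((2*x) ^ (ν/2 - 1)) with hDdef
  have hD0 : 0 < D := lt_max_of_lt_left (Real.rpow_pos_of_pos (by linarith) _)
  set u : ℕ → ℝ := fun k => D * ((ν/2 + k) * (2*x) ^ k
      / ((k.factorial : ℝ) * Real.Gamma (ν + k + 1))) with hudef
  have hu : Summable u := (summable_main ν hν0 (ν/2) (2*x) (by linarith) (by linarith)).mul_left D
  have hder : ∀ (k : ℕ), ∀ y ∈ Set.Ioo (x/2) (2*x), HasDerivAt (g k) (g' k y) y := by
    intro k y hy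
    have hy0 : 0 < y := lt_trans (by linarith) hy.1
    have h := (Real.hasDerivAt_rpow_const (x := y) (p := (ν + 2*(k:ℝ))/2)
      (Or.inl hy0.ne')).div_const ((k.factorial : ℝ) * Real.Gamma (ν + k + 1))
    convert h using 1
  have hbound : ∀ (k : ℕ), ∀ y ∈ Set.Ioo (x/2) (2*x), ‖g' k y‖ ≤ u k := by
    intro k y hy
    have hy0 : 0 < y := lt_trans (by linarith) hy.1
    have hysplit : y ^ ((ν + 2 * (k:ℝ)) / 2 - 1) = y ^ (ν/2 - 1) * y ^ k := by
      rw [← Real.rpow_natCast y k, ← Real.rpow_add hy0]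
      congr 1; ring
    have h1 : y ^ (ν/2 - 1) ≤ D := by
      rcases le_or_gt 0 (ν/2 - 1) with h | h
      · exact le_trans (Real.rpow_le_rpow hy0.le hy.2.le h) (le_max_right _ _)
      · exact le_trans (Real.rpow_le_rpow_of_nonpos (by linarith) hy.1.le h.le)
          (le_max_left _ _)
    have h2 : y ^ k ≤ (2*x) ^ k := pow_le_pow_left₀ hy0.le hy.2.le k
    have hpos : 0 < g' k y := by
      have : (0:ℝ) < (ν + 2 * (k:ℝ)) / 2 := by positivity
      have := Real.rpow_pos_of_pos hy0 ((ν + 2 * (k:ℝ)) / 2 - 1)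
      simp only [hg'def]
      positivity
    rw [Real.norm_eq_abs, abs_of_pos hpos]
    simp only [hg'def, hudef]
    rw [hysplit]
    have hrake : ((ν + 2 * (k:ℝ)) / 2) = ν/2 + k := by ring
    rw [hrake]
    calc (ν/2 + (k:ℝ)) * (y ^ (ν/2 - 1) * y ^ k) / ((k.factorial : ℝ) * Real.Gamma (ν + k + 1))
        ≤ (ν/2 + (k:ℝ)) * (D * (2*x) ^ k) / ((k.factorial : ℝ) * Real.Gamma (ν + k + 1)) := by
          gcongr
      _ = D * ((ν/2 + k) * (2*x) ^ k / ((k.factorial : ℝ) * Real.Gamma (ν + k + 1))) := by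
          ring
  have hg0 : Summable (fun k => g k x) := summable_g ν hν0 x hx
  have hxmem : x ∈ Set.Ioo (x/2) (2*x) := ⟨by linarith, by linarith⟩
  have hmain : HasDerivAt (fun z => ∑' k, g k z) (∑' k, g' k x) x :=
    hasDerivAt_tsum_of_isPreconnected hu isOpen_Ioo isPreconnected_Ioo hder hbound hxmem hg0 hxmem
  have heq : (fun t => besselI ν (2 * Real.sqrt t)) =ᶠ[nhds x] (fun z => ∑' k, g k z) := by
    filter_upwards [IsOpen.mem_nhds isOpen_Ioi hx] with t ht
    exact besselI_eq ν t ht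
  have hfinal := hmain.congr_of_eventuallyEq heq
  refine hfinal.congr_deriv ?_
  symm
  -- identify the sum of derivatives
  have hsx : Real.sqrt x > 0 := Real.sqrt_pos.mpr hx
  have hsx2 : Real.sqrt x * Real.sqrt x = x := Real.mul_self_sqrt hx.le
  set b : ℕ → ℝ :=
    fun k => x ^ ((ν - 1 + 2 * (k:ℝ)) / 2) / ((k.factorial : ℝ) * Real.Gamma (ν - 1 + k + 1))
    with hbdef
  have hB : besselI (ν - 1) (2 * Real.sqrt x) = ∑' k, b k := besselI_eq (ν-1) x hx
  have hA : besselI ν (2 * Real.sqrt x) = ∑' k, g k x := besselI_eq ν x hx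
  have hsb : Summable b := summable_g (ν-1) (by linarith) x hx
  have hterm : ∀ k : ℕ, g' k x = b k / Real.sqrt x - ν / (2*x) * g k x := by
    intro k
    have hνk : (0:ℝ) < ν + k := by positivity
    have hΓ : Real.Gamma (ν + k + 1) = (ν + k) * Real.Gamma (ν + k) :=
      Real.Gamma_add_one hνk.ne'
    have hΓarg : ν - 1 + (k:ℝ) + 1 = ν + k := by ring
    have hΓpos : (0:ℝ) < Real.Gamma (ν + k) := Real.Gamma_pos_of_pos hνk
    have hfac : (0:ℝ) < (k.factorial : ℝ) := by positivity
    have hP : (0:ℝ) < x ^ ((ν + 2 * (k:ℝ)) / 2 - 1) := Real.rpow_pos_of_pos hx _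
    have hb1 : x ^ ((ν - 1 + 2 * (k:ℝ)) / 2)
        = x ^ ((ν + 2 * (k:ℝ)) / 2 - 1) * Real.sqrt x := by
      rw [Real.sqrt_eq_rpow, ← Real.rpow_add hx]
      congr 1; ring
    have hg1 : x ^ ((ν + 2 * (k:ℝ)) / 2)
        = x ^ ((ν + 2 * (k:ℝ)) / 2 - 1) * x := by
      rw [← Real.rpow_add_one hx.ne' ((ν + 2 * (k:ℝ)) / 2 - 1)]
      congr 1; ring
    simp only [hg'def, hbdef, hgdef, hΓarg, hΓ, hb1, hg1]
    field_simp
    ring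
  rw [hA, hB, tsum_congr hterm, Summable.tsum_sub (hsb.div_const _) ((hg0).mul_left _),
    tsum_div_const, tsum_mul_left]
  set S1 := ∑' k, b k with hS1
  set S2 := ∑' k, g k x with hS2
  have hx2 : ν / (2*x) * S2 = ν / (2*Real.sqrt x) * S2 / Real.sqrt x := by
    field_simp
    first
      | (left; linear_combination 2 * hsx2)
      | linear_combination S2 * hsx2
  rw [hx2, ← sub_div]

lemma hasDerivAt_det {l : ℕ} (M : ℝ → Matrix (Fin l) (Fin l) ℝ)
    (M' : Matrix (Fin l) (Fin l) ℝ) (x : ℝ)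
    (h : ∀ i j, HasDerivAt (fun t => M t i j) (M' i j) x) :
    HasDerivAt (fun t => (M t).det)
      (Matrix.trace (Matrix.adjugate (M x) * M')) x := by
  have h1 : HasDerivAt
      (fun t => ∑ σ : Equiv.Perm (Fin l),
        ((Equiv.Perm.sign σ : ℤ) : ℝ) * ∏ i, M t (σ i) i)
      (∑ σ : Equiv.Perm (Fin l), ((Equiv.Perm.sign σ : ℤ) : ℝ) *
        ∑ i : Fin l, (∏ j ∈ Finset.univ.erase i, M x (σ j) j) • M' (σ i) i) x := by
    apply HasDerivAt.fun_sum
    intro σ _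
    exact (HasDerivAt.fun_finset_prod (fun i _ => h (σ i) i)).const_mul _
  have h2 : (fun t => (M t).det)
      = (fun t => ∑ σ : Equiv.Perm (Fin l),
        ((Equiv.Perm.sign σ : ℤ) : ℝ) * ∏ i, M t (σ i) i) := by
    funext t
    rw [Matrix.det_apply']
  rw [h2]
  convert h1 using 1
  rw [Matrix.trace]
  have key : ∀ i : Fin l, ((M x).adjugate * M').diag i
      = ∑ σ : Equiv.Perm (Fin l), ((Equiv.Perm.sign σ : ℤ) : ℝ) *
          ((∏ j ∈ Finset.univ.erase i, M x (σ j) j) * M' (σ i) i) := by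
    intro i
    have hcr : ((M x).adjugate * M').diag i
        = ((M x).adjugate *ᵥ (fun r => M' r i)) i := by
      simp [Matrix.diag, Matrix.mul_apply, Matrix.mulVec, dotProduct]
    rw [hcr, ← Matrix.cramer_eq_adjugate_mulVec, Matrix.cramer_apply, Matrix.det_apply']
    apply Finset.sum_congr rfl
    intro σ _
    rw [← Finset.mul_prod_erase Finset.univ _ (Finset.mem_univ i)]
    have hup : ∀ j ∈ Finset.univ.erase i,
        ((M x).updateCol i (fun r => M' r i)) (σ j) j = M x (σ j) j := by
      intro j hj
      rw [Matrix.updateCol_apply, if_neg (Finset.mem_erase.mp hj).1]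
    rw [Finset.prod_congr rfl hup, Matrix.updateCol_apply, if_pos rfl]
    ring
  calc ∑ i, ((M x).adjugate * M').diag i
      = ∑ i : Fin l, ∑ σ : Equiv.Perm (Fin l), ((Equiv.Perm.sign σ : ℤ) : ℝ) *
          ((∏ j ∈ Finset.univ.erase i, M x (σ j) j) * M' (σ i) i) :=
        Finset.sum_congr rfl (fun i _ => key i)
    _ = ∑ σ : Equiv.Perm (Fin l), ∑ i : Fin l, ((Equiv.Perm.sign σ : ℤ) : ℝ) *
          ((∏ j ∈ Finset.univ.erase i, M x (σ j) j) * M' (σ i) i) := Finset.sum_comm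
    _ = ∑ σ : Equiv.Perm (Fin l), ((Equiv.Perm.sign σ : ℤ) : ℝ) *
          ∑ i : Fin l, (∏ j ∈ Finset.univ.erase i, M x (σ j) j) • M' (σ i) i := by
        apply Finset.sum_congr rfl
        intro σ _
        rw [Finset.mul_sum]
        simp [smul_eq_mul]

/-- With `A(x) = [I_{j+k+α+1}(2√x)]` and `B(x) = [I_{j+k+α}(2√x)]`, one has
`√x (det A)′(x) + ((l² + lα)/(2√x)) det A(x) − Tr(adj(A(x))·B(x)) = 0` for `x > 0`. -/
theorem adjugate_trace_identity (α : ℝ) (hα : 0 ≤ α) (l : ℕ) (hl : 1 ≤ l) :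
    ∀ x : ℝ, 0 < x →
      Real.sqrt x *
          deriv (fun t : ℝ => Matrix.det (Matrix.of fun j k : Fin l =>
            besselI (((j : ℕ) : ℝ) + ((k : ℕ) : ℝ) + α + 1) (2 * Real.sqrt t))) x
        + (((l : ℝ) ^ 2 + (l : ℝ) * α) / (2 * Real.sqrt x)) *
            Matrix.det (Matrix.of fun j k : Fin l =>
              besselI (((j : ℕ) : ℝ) + ((k : ℕ) : ℝ) + α + 1) (2 * Real.sqrt x))
        - Matrix.trace
            ((Matrix.adjugate (Matrix.of fun j k : Fin l =>
                besselI (((j : ℕ) : ℝ) + ((k : ℕ) : ℝ) + α + 1) (2 * Real.sqrt x)))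
              * (Matrix.of fun j k : Fin l =>
                besselI (((j : ℕ) : ℝ) + ((k : ℕ) : ℝ) + α) (2 * Real.sqrt x)))
        = 0 := by
  intro x hx
  have hsx : 0 < Real.sqrt x := Real.sqrt_pos.mpr hx
  set A : Matrix (Fin l) (Fin l) ℝ := Matrix.of fun j k : Fin l =>
    besselI (((j : ℕ) : ℝ) + ((k : ℕ) : ℝ) + α + 1) (2 * Real.sqrt x) with hAdef
  set B : Matrix (Fin l) (Fin l) ℝ := Matrix.of fun j k : Fin l =>
    besselI (((j : ℕ) : ℝ) + ((k : ℕ) : ℝ) + α) (2 * Real.sqrt x) with hBdef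
  set M' : Matrix (Fin l) (Fin l) ℝ := Matrix.of fun j k : Fin l =>
    (B j k - ((((j : ℕ) : ℝ) + ((k : ℕ) : ℝ) + α + 1)) / (2 * Real.sqrt x) * A j k)
      / Real.sqrt x with hM'def
  have hder : ∀ j k : Fin l, HasDerivAt
      (fun t => (Matrix.of fun j k : Fin l =>
        besselI (((j : ℕ) : ℝ) + ((k : ℕ) : ℝ) + α + 1) (2 * Real.sqrt t)) j k)
      (M' j k) x := by
    intro j k
    have h1 : (1:ℝ) ≤ ((j : ℕ) : ℝ) + ((k : ℕ) : ℝ) + α + 1 := by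
      have hj : (0:ℝ) ≤ ((j : ℕ) : ℝ) := Nat.cast_nonneg _
      have hk : (0:ℝ) ≤ ((k : ℕ) : ℝ) := Nat.cast_nonneg _
      linarith
    have h := hasDerivAt_besselI_sqrt (((j : ℕ) : ℝ) + ((k : ℕ) : ℝ) + α + 1) h1 x hx
    have harg : (((j : ℕ) : ℝ) + ((k : ℕ) : ℝ) + α + 1) - 1
        = ((j : ℕ) : ℝ) + ((k : ℕ) : ℝ) + α := by ring
    rw [harg] at h
    simpa [hM'def, hAdef, hBdef] using h
  have hdet : deriv (fun t : ℝ => Matrix.det (Matrix.of fun j k : Fin l =>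
      besselI (((j : ℕ) : ℝ) + ((k : ℕ) : ℝ) + α + 1) (2 * Real.sqrt t))) x
      = Matrix.trace (Matrix.adjugate A * M') := by
    have h := (hasDerivAt_det (fun t => Matrix.of fun j k : Fin l =>
      besselI (((j : ℕ) : ℝ) + ((k : ℕ) : ℝ) + α + 1) (2 * Real.sqrt t)) M' x hder).deriv
    exact h
  rw [hdet]
  set adj := Matrix.adjugate A with hadjdef
  set D := Matrix.det A with hDdef
  have htr : ∀ P Q : Matrix (Fin l) (Fin l) ℝ,
      Matrix.trace (P * Q) = ∑ i : Fin l, ∑ j : Fin l, P i j * Q j i := by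
    intro P Q
    simp [Matrix.trace, Matrix.mul_apply, Matrix.diag]
  have f1 : ∀ i : Fin l, ∑ j : Fin l, adj i j * A j i = D := by
    intro i
    have h := Matrix.adjugate_mul A
    have h2 := congrFun (congrFun h i) i
    rw [Matrix.mul_apply] at h2
    simpa [Matrix.one_apply] using h2
  have f2 : ∀ j : Fin l, ∑ i : Fin l, A j i * adj i j = D := by
    intro j
    have h := Matrix.mul_adjugate A
    have h2 := congrFun (congrFun h j) j
    rw [Matrix.mul_apply] at h2
    simpa [Matrix.one_apply] using h2
  have hG : ∑ j : Fin l, ((j : ℕ) : ℝ) = ((l:ℝ)^2 - l)/2 := by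
    rw [Fin.sum_univ_eq_sum_range (fun i => ((i : ℕ) : ℝ)) l]
    have h2 := Finset.sum_range_id_mul_two l
    have h3 : ((∑ i ∈ Finset.range l, i : ℕ) : ℝ) * 2 = (l:ℝ) * ((l:ℝ) - 1) := by
      rw [← Nat.cast_ofNat, ← Nat.cast_mul, h2, Nat.cast_mul, Nat.cast_sub hl]
      norm_num
    push_cast at h3 ⊢
    linarith
  have hS : ∑ i : Fin l, ∑ j : Fin l,
      adj i j * ((((j : ℕ) : ℝ) + ((i : ℕ) : ℝ) + α + 1) * A j i)
      = ((l:ℝ)^2 + (l:ℝ)*α) * D := by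
    have expand : ∀ i j : Fin l,
        adj i j * ((((j : ℕ) : ℝ) + ((i : ℕ) : ℝ) + α + 1) * A j i)
        = (A j i * adj i j) * ((j : ℕ) : ℝ) + (adj i j * A j i) * ((i : ℕ) : ℝ)
          + (α + 1) * (adj i j * A j i) := by
      intro i j; ring
    simp only [expand, Finset.sum_add_distrib]
    have e1 : ∑ i : Fin l, ∑ j : Fin l, (A j i * adj i j) * ((j : ℕ) : ℝ)
        = D * (((l:ℝ)^2 - l)/2) := by
      rw [Finset.sum_comm]
      have : ∀ j : Fin l, ∑ i : Fin l, (A j i * adj i j) * ((j : ℕ) : ℝ)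
          = D * ((j : ℕ) : ℝ) := by
        intro j; rw [← Finset.sum_mul, f2 j]
      rw [Finset.sum_congr rfl (fun j _ => this j), ← Finset.mul_sum, hG]
    have e2 : ∑ i : Fin l, ∑ j : Fin l, (adj i j * A j i) * ((i : ℕ) : ℝ)
        = D * (((l:ℝ)^2 - l)/2) := by
      have : ∀ i : Fin l, ∑ j : Fin l, (adj i j * A j i) * ((i : ℕ) : ℝ)
          = D * ((i : ℕ) : ℝ) := by
        intro i; rw [← Finset.sum_mul, f1 i]
      rw [Finset.sum_congr rfl (fun i _ => this i), ← Finset.mul_sum, hG]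
    have e3 : ∑ i : Fin l, ∑ j : Fin l, (α + 1) * (adj i j * A j i)
        = (α + 1) * ((l:ℝ) * D) := by
      have : ∀ i : Fin l, ∑ j : Fin l, (α + 1) * (adj i j * A j i)
          = (α + 1) * D := by
        intro i; rw [← Finset.mul_sum, f1 i]
      rw [Finset.sum_congr rfl (fun i _ => this i), Finset.sum_const, Finset.card_univ,
        Fintype.card_fin, nsmul_eq_mul]
      ring
    rw [e1, e2, e3]
    ring
  rw [htr adj M', htr adj B]
  have hM'val : ∀ i j : Fin l, Real.sqrt x * (adj i j * M' j i)
      = adj i j * B j i - (2 * Real.sqrt x)⁻¹ *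
          (adj i j * ((((j : ℕ) : ℝ) + ((i : ℕ) : ℝ) + α + 1) * A j i)) := by
    intro i j
    have hm : M' j i = (B j i - ((((j : ℕ) : ℝ) + ((i : ℕ) : ℝ) + α + 1)) / (2 * Real.sqrt x)
        * A j i) / Real.sqrt x := by
      simp [hM'def]
    rw [hm]
    field_simp
  have e4 : Real.sqrt x * ∑ i : Fin l, ∑ j : Fin l, adj i j * M' j i
      = (∑ i : Fin l, ∑ j : Fin l, adj i j * B j i)
        - (2 * Real.sqrt x)⁻¹ * ∑ i : Fin l, ∑ j : Fin l,
            adj i j * ((((j : ℕ) : ℝ) + ((i : ℕ) : ℝ) + α + 1) * A j i) := by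
    simp only [Finset.mul_sum, ← Finset.sum_sub_distrib]
    exact Finset.sum_congr rfl (fun i _ => Finset.sum_congr rfl (fun j _ => hM'val i j))
  rw [e4, hS]
  field_simp
  ring
end
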